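/- arXiv:2107.05099 — 11 statements merged into one kernel-verified Lean document; each statement's English description precedes it below -/
import Mathlib

section
/- For every set partition π of the disjoint union Fin m ⊕ Fin n and every permutation σ ∈ S_t, the operator T_π commutes with the diagonal action of σ: T_π(σ·v) = σ·(T_π v) for all v ∈ U_t^{⊗n}. In other words, each T_π is a homomorphism of representations of the symmetric group S_t from U_t^{⊗n} to U_t^{⊗m}. (Part of Deligne's Schur–Weyl duality, Theorem 4.1 of the paper.) -/
open scoped Classical

noncomputable section

/-- The partition operator `T_π : U_t^{⊗n} → U_t^{⊗m}` attached to a set partition `π` of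
`Fin m ⊕ Fin n` (encoded as an equivalence relation, i.e. a `Setoid`).  Here `U_t^{⊗n}` is
identified with the free `k`-module on the functions `I : Fin n → Fin t`, and
`T_π u_I = ∑_J u_J`, the sum over those `J : Fin m → Fin t` for which the combined function
`Sum.elim J I` is constant on every block of `π`. -/
def partitionMap (k : Type*) [Field k] (t m n : ℕ) (π : Setoid (Fin m ⊕ Fin n)) :
    ((Fin n → Fin t) → k) →ₗ[k] ((Fin m → Fin t) → k) :=
  Matrix.mulVecLin (Matrix.of fun (J : Fin m → Fin t) (I : Fin n → Fin t) =>
    if ∀ x y : Fin m ⊕ Fin n, π.r x y → Sum.elim J I x = Sum.elim J I y then (1 : k) else 0)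

/-- The diagonal action of `σ ∈ S_t` on `U_t^{⊗n}`:  `σ · u_I = u_{σ ∘ I}`. -/
def diagAct (k : Type*) [Field k] (t n : ℕ) (σ : Equiv.Perm (Fin t)) :
    ((Fin n → Fin t) → k) →ₗ[k] ((Fin n → Fin t) → k) :=
  Matrix.mulVecLin (Matrix.of fun (J I : Fin n → Fin t) =>
    if (fun p => σ (I p)) = J then (1 : k) else 0)

/-- For every set partition `π` of `Fin m ⊕ Fin n` and every permutation `σ ∈ S_t`, the
operator `T_π` commutes with the diagonal action of `σ`:  each `T_π` is a homomorphism of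
representations of `S_t` from `U_t^{⊗n}` to `U_t^{⊗m}`. -/
theorem stmt0 (k : Type*) [Field k] [CharZero k] (t m n : ℕ)
    (π : Setoid (Fin m ⊕ Fin n)) (σ : Equiv.Perm (Fin t)) (v : (Fin n → Fin t) → k) :
    partitionMap k t m n π (diagAct k t n σ v) = diagAct k t m σ (partitionMap k t m n π v) := by
  rw [partitionMap, diagAct, diagAct]
  simp only [← LinearMap.comp_apply, ← Matrix.mulVecLin_mul]
  congr 2
  ext J I
  simp only [Matrix.mul_apply, Matrix.of_apply, mul_ite, mul_one, mul_zero, ite_mul, one_mul,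
    zero_mul, Finset.sum_ite_eq, Finset.sum_ite_eq', Finset.mem_univ, if_true]
  have key : (∀ x y : Fin m ⊕ Fin n, π.r x y →
      Sum.elim J (fun p => σ (I p)) x = Sum.elim J (fun p => σ (I p)) y) ↔
      (∀ x y : Fin m ⊕ Fin n, π.r x y →
      Sum.elim (fun p => σ⁻¹ (J p)) I x = Sum.elim (fun p => σ⁻¹ (J p)) I y) := by
    have hcomp : ∀ x : Fin m ⊕ Fin n,
        Sum.elim J (fun p => σ (I p)) x = σ (Sum.elim (fun p => σ⁻¹ (J p)) I x) := by
      rintro (a | b) <;> simp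
    constructor
    · intro h x y hxy
      have := h x y hxy
      rw [hcomp, hcomp] at this
      exact σ.injective this
    · intro h x y hxy
      rw [hcomp, hcomp]
      exact congrArg σ (h x y hxy)
  have hsum : (∑ J' : Fin m → Fin t,
      if ∀ x y : Fin m ⊕ Fin n, π.r x y → Sum.elim J' I x = Sum.elim J' I y then
      (if (fun p => σ (J' p)) = J then (1:k) else 0)
      else 0) = if ∀ x y : Fin m ⊕ Fin n, π.r x y →
      Sum.elim (fun p => σ⁻¹ (J p)) I x = Sum.elim (fun p => σ⁻¹ (J p)) I y then (1:k) else 0 := by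
    rw [Finset.sum_eq_single (fun p => σ⁻¹ (J p))]
    · have : (fun p => σ (σ⁻¹ (J p))) = J := by funext p; simp
      simp [this]
    · intro b _ hb
      split_ifs with h1 h2
      · exfalso
        apply hb
        funext p
        have := congrFun h2 p
        rw [← this]
        simp
      · rfl
      · rfl
    · simp
  rw [hsum]; exact if_congr key rfl rfl
end
end

section
/- Let l, m, n, t be natural numbers, π a set partition of Fin l ⊕ Fin m and ρ a set partition of Fin m ⊕ Fin n. Regard Fin l ⊕ Fin m ⊕ Fin n; let π̃ be the set partition of this set obtained from π (placed on the first two summands) by adding each element of Fin n as a singleton block, and ρ̃ the one obtained from ρ (placed on the last two summands) by adding each element of Fin l as a singleton block. Let σ = π̃ ∨ ρ̃ be their join (finest common coarsening) in the lattice of set partitions, let c be the number of blocks of σ contained entirely in the middle summand Fin m, and let π∘ρ be the set partition of Fin l ⊕ Fin n whose blocks are the nonempty intersections of the blocks of σ with Fin l ⊕ Fin n. Then the composite of the partition operators satisfies T_π ∘ T_ρ = t^c · T_{π∘ρ} as k-linear maps U_t^{⊗n} → U_t^{⊗l}, where t^c is taken in k via the canonical map ℕ → k. (This is the composition rule making the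 assignment π ↦ T_π a k-linear functor from the combinatorially defined partition category to representations of S_t.) -/
open scoped Classical

noncomputable section

/-- The disjoint union of two set partitions. -/
def sumSetoid {α β : Type*} (s : Setoid α) (u : Setoid β) : Setoid (α ⊕ β) :=
  Setoid.ker (Sum.map (Quotient.mk s) (Quotient.mk u))

/-- `π̃`: the set partition of `Fin l ⊕ Fin m ⊕ Fin n` obtained from `π` (placed on the first
two summands) by adding each element of `Fin n` as a singleton block. -/
def tildePi (l m n : ℕ) (π : Setoid (Fin l ⊕ Fin m)) : Setoid (Fin l ⊕ (Fin m ⊕ Fin n)) :=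
  Setoid.comap (⇑(Equiv.sumAssoc (Fin l) (Fin m) (Fin n)).symm)
    (sumSetoid π (Setoid.ker (id : Fin n → Fin n)))

/-- `ρ̃`: the set partition of `Fin l ⊕ Fin m ⊕ Fin n` obtained from `ρ` (placed on the last
two summands) by adding each element of `Fin l` as a singleton block. -/
def tildeRho (l m n : ℕ) (ρ : Setoid (Fin m ⊕ Fin n)) : Setoid (Fin l ⊕ (Fin m ⊕ Fin n)) :=
  sumSetoid (Setoid.ker (id : Fin l → Fin l)) ρ

/-- `σ = π̃ ⊔ ρ̃`, the join (finest common coarsening) in the lattice of set partitions. -/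
def joinSetoid (l m n : ℕ) (π : Setoid (Fin l ⊕ Fin m)) (ρ : Setoid (Fin m ⊕ Fin n)) :
    Setoid (Fin l ⊕ (Fin m ⊕ Fin n)) :=
  tildePi l m n π ⊔ tildeRho l m n ρ

/-- `c`: the number of blocks of `σ = π̃ ⊔ ρ̃` contained entirely in the middle summand. -/
def middleBlocks (l m n : ℕ) (π : Setoid (Fin l ⊕ Fin m)) (ρ : Setoid (Fin m ⊕ Fin n)) : ℕ :=
  {B | B ∈ (joinSetoid l m n π ρ).classes ∧
    B ⊆ Set.range fun x : Fin m => (Sum.inr (Sum.inl x) : Fin l ⊕ (Fin m ⊕ Fin n))}.ncard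

/-- `π ∘ ρ`: the set partition of `Fin l ⊕ Fin n` whose blocks are the nonempty intersections
of the blocks of `σ = π̃ ⊔ ρ̃` with `Fin l ⊕ Fin n`. -/
def compSetoid (l m n : ℕ) (π : Setoid (Fin l ⊕ Fin m)) (ρ : Setoid (Fin m ⊕ Fin n)) :
    Setoid (Fin l ⊕ Fin n) :=
  Setoid.comap (Sum.map (id : Fin l → Fin l) (Sum.inr : Fin n → Fin m ⊕ Fin n))
    (joinSetoid l m n π ρ)

/-!
The `(J, I)` entry of the matrix of `T_π ∘ T_ρ` counts the labellings `K` of the middle points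
for which `Sum.elim J K` is constant on the blocks of `π` and `Sum.elim K I` on those of `ρ`,
i.e. for which `Sum.elim J (Sum.elim K I)` is constant on the blocks of the join `σ`. Such a
labelling is a function on the blocks of `σ` with prescribed values on the blocks meeting the
boundary `Fin l ⊕ Fin n`: it exists iff `Sum.elim J I` is constant on the blocks of `π ∘ ρ`,
and then the `c` blocks inside the middle are labelled freely, in `t ^ c` ways.
-/

theorem Function.card_subtype_comp_eq {β Q X : Type*} [Finite Q] [Finite X] (f : β → Q)
    (g : β → X) :
    Nat.card {h : Q → X // h ∘ f = g} =
      if g.FactorsThrough f then Nat.card X ^ Nat.card ↥(Set.range f)ᶜ else 0 := by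
  split_ifs with hg
  · rw [← Nat.card_fun]
    refine Nat.card_congr (Equiv.ofBijective (fun h q => h.1 q) ⟨?_, ?_⟩)
    · rintro ⟨h₁, hh₁⟩ ⟨h₂, hh₂⟩ heq
      ext q
      by_cases hq : q ∈ Set.range f
      · obtain ⟨b, rfl⟩ := hq
        exact (congrFun hh₁ b).trans (congrFun hh₂ b).symm
      · exact congrFun heq ⟨q, hq⟩
    · intro k
      refine ⟨⟨fun q => if hq : q ∈ Set.range f then g hq.choose else k ⟨q, hq⟩,
        funext fun b => ?_⟩, funext fun q => dif_neg q.2⟩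
      rw [Function.comp_apply, dif_pos ⟨b, rfl⟩]
      exact hg (show ∃ a, f a = f b from ⟨b, rfl⟩).choose_spec
  · rw [Nat.card_eq_zero]
    refine .inl ⟨fun ⟨h, hh⟩ => hg fun a b hab => ?_⟩
    rw [← hh, Function.comp_apply, Function.comp_apply, hab]

theorem Setoid.factorsThrough_mk_comp_iff {α β X : Type*} (σ : Setoid α) (f : β → α)
    (g : β → X) : g.FactorsThrough (Quotient.mk σ ∘ f) ↔ σ.comap f ≤ Setoid.ker g :=
  ⟨fun h _ _ hab => h (Quotient.sound hab), fun h _ _ hab => h ((Quotient.eq (r := σ)).1 hab)⟩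

theorem Setoid.ncard_classes_subset {α : Type*} (σ : Setoid α) (S : Set α) :
    {B | B ∈ σ.classes ∧ B ⊆ S}.ncard = Nat.card ↥(Quotient.mk σ '' Sᶜ)ᶜ := by
  have hmem (q : Quotient σ) : q ∈ (Quotient.mk σ '' Sᶜ)ᶜ ↔ (σ.quotientEquivClasses q).1 ⊆ S := by
    induction q using Quotient.ind with | _ a
    simp only [Setoid.quotientEquivClasses_mk_eq, Set.mem_compl_iff, Set.mem_image,
      Quotient.eq, not_exists, not_and, not_imp_not, Set.subset_def, Set.mem_ofPred_eq]
  rw [← Nat.card_coe_set_eq]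
  exact (Nat.card_congr (((σ.quotientEquivClasses).subtypeEquiv hmem).trans
    (Equiv.subtypeSubtypeEquivSubtypeInter (· ∈ σ.classes) (· ⊆ S)))).symm

def Setoid.extensionEquiv {α β γ X : Type*} (σ : Setoid α) (e : β ⊕ γ ≃ α) (g : β → X) :
    {K : γ → X // σ ≤ Setoid.ker (Sum.elim g K ∘ e.symm)} ≃
      {h : Quotient σ → X // h ∘ (Quotient.mk σ ∘ e ∘ Sum.inl) = g} where
  toFun K := ⟨Quotient.lift (Sum.elim g K.1 ∘ e.symm) K.2, funext fun b => by simp⟩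
  invFun := fun ⟨h, hh⟩ => ⟨h ∘ Quotient.mk σ ∘ e ∘ Sum.inr, by
    have hglue : Sum.elim g (h ∘ Quotient.mk σ ∘ e ∘ Sum.inr) ∘ e.symm = h ∘ Quotient.mk σ := by
      subst hh
      funext a
      obtain ⟨b | c, rfl⟩ := e.surjective a <;> simp
    rw [hglue]
    exact fun x y hxy => congrArg h (Quotient.sound hxy)⟩
  left_inv K := Subtype.ext <| funext fun c => by simp
  right_inv := fun ⟨h, hh⟩ => by
    subst hh
    refine Subtype.ext <| funext <| Quotient.ind fun a => ?_
    obtain ⟨b | c, rfl⟩ := e.surjective a <;> simp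

theorem Setoid.card_extensions {α β γ X : Type*} [Finite α] [Finite X] (σ : Setoid α)
    (e : β ⊕ γ ≃ α) (g : β → X) :
    Nat.card {K : γ → X // σ ≤ Setoid.ker (Sum.elim g K ∘ e.symm)} =
      if σ.comap (e ∘ Sum.inl) ≤ Setoid.ker g then
        Nat.card X ^ {B | B ∈ σ.classes ∧ B ⊆ Set.range (e ∘ Sum.inr)}.ncard
      else 0 := by
  have hc : (Set.range (e ∘ Sum.inr))ᶜ = Set.range (e ∘ Sum.inl) := by
    rw [Set.range_comp, Set.range_comp, ← e.image_compl, Set.compl_range_inr]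
  rw [Setoid.ncard_classes_subset, hc, ← Set.range_comp, ← Setoid.factorsThrough_mk_comp_iff,
    ← Function.card_subtype_comp_eq]
  exact Nat.card_congr (σ.extensionEquiv e g)

theorem Setoid.comap_symm_le_ker_iff {α β X : Type*} (e : α ≃ β) (S : Setoid α) (F : β → X) :
    S.comap e.symm ≤ Setoid.ker F ↔ S ≤ Setoid.ker (F ∘ e) :=
  ⟨fun h a b hab => by
    simpa using h (x := e a) (y := e b) ((S.comap_rel _ _ _).2 (by simpa using hab)),
   fun h x y hxy => by simpa using h hxy⟩

theorem sumSetoid_le_ker_sumElim {α β X : Type*} (s : Setoid α) (u : Setoid β) (f : α → X)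
    (g : β → X) :
    sumSetoid s u ≤ Setoid.ker (Sum.elim f g) ↔ s ≤ Setoid.ker f ∧ u ≤ Setoid.ker g := by
  refine ⟨fun h => ⟨fun a b hab => ?_, fun a b hab => ?_⟩, ?_⟩
  · exact h (x := .inl a) (y := .inl b) (congrArg Sum.inl (Quotient.sound hab))
  · exact h (x := .inr a) (y := .inr b) (congrArg Sum.inr (Quotient.sound hab))
  · rintro ⟨hs, hu⟩ (a | a) (b | b) hab
    · exact hs (Quotient.exact (Sum.inl_injective hab))
    · exact absurd hab Sum.inl_ne_inr
    · exact absurd hab Sum.inr_ne_inl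
    · exact hu (Quotient.exact (Sum.inr_injective hab))

section Composition

variable {l m n : ℕ} {X : Type*}

theorem tildePi_le_ker_iff (π : Setoid (Fin l ⊕ Fin m)) (J : Fin l → X) (K : Fin m → X)
    (I : Fin n → X) :
    tildePi l m n π ≤ Setoid.ker (Sum.elim J (Sum.elim K I)) ↔ π ≤ Setoid.ker (Sum.elim J K) := by
  have hassoc : Sum.elim J (Sum.elim K I) ∘ Equiv.sumAssoc _ _ _ = Sum.elim (Sum.elim J K) I := by
    ext ((a | a) | a) <;> rfl
  rw [tildePi, Setoid.comap_symm_le_ker_iff, hassoc, sumSetoid_le_ker_sumElim,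
    Setoid.ker_eq_bot_iff.2 Function.injective_id, and_iff_left bot_le]

theorem tildeRho_le_ker_iff (ρ : Setoid (Fin m ⊕ Fin n)) (J : Fin l → X) (K : Fin m → X)
    (I : Fin n → X) :
    tildeRho l m n ρ ≤ Setoid.ker (Sum.elim J (Sum.elim K I)) ↔ ρ ≤ Setoid.ker (Sum.elim K I) := by
  rw [tildeRho, sumSetoid_le_ker_sumElim, Setoid.ker_eq_bot_iff.2 Function.injective_id,
    and_iff_right bot_le]

theorem joinSetoid_le_ker_iff (π : Setoid (Fin l ⊕ Fin m)) (ρ : Setoid (Fin m ⊕ Fin n))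
    (J : Fin l → X) (K : Fin m → X) (I : Fin n → X) :
    joinSetoid l m n π ρ ≤ Setoid.ker (Sum.elim J (Sum.elim K I)) ↔
      π ≤ Setoid.ker (Sum.elim J K) ∧ ρ ≤ Setoid.ker (Sum.elim K I) := by
  rw [joinSetoid, sup_le_iff, tildePi_le_ker_iff, tildeRho_le_ker_iff]

def boundarySumMiddleEquiv (l m n : ℕ) : (Fin l ⊕ Fin n) ⊕ Fin m ≃ Fin l ⊕ (Fin m ⊕ Fin n) :=
  (Equiv.sumAssoc _ _ _).trans ((Equiv.refl _).sumCongr (Equiv.sumComm _ _))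

theorem card_middle_extensions [Finite X] (π : Setoid (Fin l ⊕ Fin m))
    (ρ : Setoid (Fin m ⊕ Fin n)) (J : Fin l → X) (I : Fin n → X) :
    Nat.card {K : Fin m → X // joinSetoid l m n π ρ ≤ Setoid.ker (Sum.elim J (Sum.elim K I))} =
      if compSetoid l m n π ρ ≤ Setoid.ker (Sum.elim J I) then
        Nat.card X ^ middleBlocks l m n π ρ
      else 0 := by
  have hglue (K : Fin m → X) : Sum.elim J (Sum.elim K I) =
      Sum.elim (Sum.elim J I) K ∘ (boundarySumMiddleEquiv l m n).symm := by
    rw [Equiv.eq_comp_symm]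
    ext ((a | a) | a) <;> rfl
  have hboundary : boundarySumMiddleEquiv l m n ∘ Sum.inl = Sum.map id Sum.inr := by
    ext (a | a) <;> rfl
  simp only [hglue]
  rw [Setoid.card_extensions, hboundary]
  rfl

end Composition

def partitionMatrix (k : Type*) [Zero k] [One k] (t m n : ℕ) (π : Setoid (Fin m ⊕ Fin n)) :
    Matrix (Fin m → Fin t) (Fin n → Fin t) k :=
  Matrix.of fun J I => if π ≤ Setoid.ker (Sum.elim J I) then 1 else 0

theorem partitionMap_eq_mulVecLin (k : Type*) [Field k] (t m n : ℕ)
    (π : Setoid (Fin m ⊕ Fin n)) :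
    partitionMap k t m n π = (partitionMatrix k t m n π).mulVecLin := by
  rw [partitionMap, partitionMatrix]
  congr with J I
  exact if_congr Iff.rfl rfl rfl

theorem partitionMatrix_mul (k : Type*) [Semiring k] (t l m n : ℕ)
    (π : Setoid (Fin l ⊕ Fin m)) (ρ : Setoid (Fin m ⊕ Fin n)) :
    partitionMatrix k t l m π * partitionMatrix k t m n ρ =
      (t : k) ^ middleBlocks l m n π ρ • partitionMatrix k t l n (compSetoid l m n π ρ) := by
  ext J I
  have hcount : (Finset.univ.filter fun K : Fin m → Fin t =>
      π ≤ Setoid.ker (Sum.elim J K) ∧ ρ ≤ Setoid.ker (Sum.elim K I)).card =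
      if compSetoid l m n π ρ ≤ Setoid.ker (Sum.elim J I) then t ^ middleBlocks l m n π ρ
      else 0 := by
    rw [← Fintype.card_subtype, ← Nat.card_eq_fintype_card,
      ← Nat.card_congr (Equiv.subtypeEquivRight fun K => joinSetoid_le_ker_iff π ρ J K I),
      card_middle_extensions, Nat.card_fin]
  simp only [partitionMatrix, Matrix.mul_apply, Matrix.of_apply, boole_mul,
    ← ite_and, Finset.sum_boole, hcount]
  rw [Matrix.smul_apply, Matrix.of_apply]
  split_ifs <;> simp

theorem stmt1_general (k : Type*) [Field k] (t l m n : ℕ)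
    (π : Setoid (Fin l ⊕ Fin m)) (ρ : Setoid (Fin m ⊕ Fin n)) :
    (partitionMap k t l m π).comp (partitionMap k t m n ρ)
      = (t : k) ^ middleBlocks l m n π ρ • partitionMap k t l n (compSetoid l m n π ρ) := by
  simp only [partitionMap_eq_mulVecLin, ← Matrix.mulVecLin_mul, partitionMatrix_mul]
  exact map_smul (Matrix.mulVecBilin k k) _ _

/-- `T_π ∘ T_ρ = t^c • T_{π∘ρ}`: the composition rule in the partition category. -/
theorem stmt1 (k : Type*) [Field k] [CharZero k] (t l m n : ℕ)
    (π : Setoid (Fin l ⊕ Fin m)) (ρ : Setoid (Fin m ⊕ Fin n)) :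
    (partitionMap k t l m π).comp (partitionMap k t m n ρ)
      = (t : k) ^ middleBlocks l m n π ρ • partitionMap k t l n (compSetoid l m n π ρ) :=
  stmt1_general k t l m n π ρ
end
end

section
/- If t ≥ m + n, then the family of linear maps (T_π), indexed by all set partitions π of Fin m ⊕ Fin n, is linearly independent in the space of k-linear maps from U_t^{⊗n} to U_t^{⊗m}. (The last assertion of Theorem 4.1: Deligne's functor ψ_t is injective on Hom-spaces when t ≥ m + n.) -/
/-!
The coefficient of `u_J` in `T_σ u_I` is `1` exactly when `σ` refines the kernel of the
colouring `Sum.elim J I` of `Fin m ⊕ Fin n`. When `t ≥ m + n`, every partition `π` is the kernel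
of some colouring, so these coefficient functionals make the family `(T_σ)` unitriangular for the
refinement order on partitions, hence linearly independent.
-/

open scoped Classical

noncomputable section

instance Setoid.instFinite (α : Type*) [Finite α] : Finite (Setoid α) :=
  Finite.of_injective (fun s : Setoid α => s.r) fun _ _ h =>
    Setoid.ext fun x y => .of_eq (congrFun₂ h x y)

theorem Setoid.exists_ker_eq_of_card_le {α β : Type*} [Fintype α] [Fintype β] (π : Setoid α)
    (h : Fintype.card α ≤ Fintype.card β) : ∃ K : α → β, Setoid.ker K = π := by
  obtain ⟨f⟩ := Function.Embedding.nonempty_of_card_le ((Fintype.card_quotient_le π).trans h)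
  exact ⟨f ∘ Quotient.mk π, Setoid.ext fun x y => by
    rw [Setoid.ker_def, Function.comp_apply, Function.comp_apply, f.injective.eq_iff, Quotient.eq]⟩

theorem linearIndependent_of_unitriangular {R M ι : Type*} [Ring R] [AddCommGroup M] [Module R M]
    [PartialOrder ι] [Finite ι] (v : ι → M) (φ : ι → M →ₗ[R] R)
    (hφ : ∀ σ π, φ π (v σ) = if σ ≤ π then 1 else 0) : LinearIndependent R v := by
  have := Fintype.ofFinite ι
  rw [Fintype.linearIndependent_iff]
  intro g hg π
  have hsum : ∀ π, ∑ σ, (if σ ≤ π then g σ else 0) = 0 := fun π => by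
    simpa [map_sum, hφ] using congrArg (φ π) hg
  induction π using WellFoundedLT.induction with
  | _ π ih =>
    have hπ := hsum π
    rwa [Finset.sum_eq_single π (fun σ _ hσπ => ?_) (by simp), if_pos le_rfl] at hπ
    split_ifs with hσ
    · exact ih σ (lt_of_le_of_ne hσ hσπ)
    · rfl

theorem partitionMap_single_apply {k : Type*} [Field k] {t m n : ℕ} (π : Setoid (Fin m ⊕ Fin n))
    (I : Fin n → Fin t) (J : Fin m → Fin t) :
    partitionMap k t m n π (Pi.single I 1) J = if π ≤ Setoid.ker (Sum.elim J I) then 1 else 0 := by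
  simp [partitionMap, Matrix.mulVec_single, Setoid.le_def, Setoid.ker_def]

theorem stmt2_general (k : Type*) [Field k] (t m n : ℕ) (h : m + n ≤ t) :
    LinearIndependent k (fun π : Setoid (Fin m ⊕ Fin n) => partitionMap k t m n π) := by
  choose K hK using fun π : Setoid (Fin m ⊕ Fin n) =>
    π.exists_ker_eq_of_card_le (β := Fin t) (by simpa using h)
  refine linearIndependent_of_unitriangular _
    (fun π => (LinearMap.proj (K π ∘ Sum.inl)).comp
      (LinearMap.applyₗ (Pi.single (K π ∘ Sum.inr) 1)))
    fun σ π => ?_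
  simp [partitionMap_single_apply, Sum.elim_comp_inl_inr, hK]

/-- If `t ≥ m + n`, the family of operators `T_π`, indexed by the set partitions of
`Fin m ⊕ Fin n`, is linearly independent in `Hom_k(U_t^{⊗n}, U_t^{⊗m})`. -/
theorem stmt2 (k : Type*) [Field k] [CharZero k] (t m n : ℕ) (h : m + n ≤ t) :
    LinearIndependent k (fun π : Setoid (Fin m ⊕ Fin n) => partitionMap k t m n π) :=
  stmt2_general k t m n h
end
end

section
/- For every j with 1 ≤ j ≤ n, the Jucys–Murphy operators X_j^L and X_j^R on U_t^{⊗n} commute with the diagonal action of S_t; that is, X_j^L and X_j^R are endomorphisms of U_t^{⊗n} as a representation of S_t. (Consequence of Theorem 4.12: these operators are the images under Deligne's functor ψ_t of the Jucys–Murphy elements x_j^L, x_j^R of the partition algebra P_n(t).) -/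
open scoped Classical

noncomputable section

/-- The Jucys–Murphy operator `X_j^L` on `U_t^{⊗n}`, where the tensor factors are indexed by
positions `p : Fin n` (position `p` is the string numbered `j = p + 1`).  On the basis vector
`u_I` it acts by `u_I ↦ ∑_{a : Fin t} u_{I_a}`, where `I_a` is obtained by applying the
transposition `(a, I p)` to all entries at positions `q ≤ p`. -/
def jmL (k : Type*) [Field k] (t n : ℕ) (p : Fin n) :
    ((Fin n → Fin t) → k) →ₗ[k] ((Fin n → Fin t) → k) :=
  ∑ a : Fin t, Matrix.mulVecLin (Matrix.of fun (J I : Fin n → Fin t) =>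
    if (fun q => if q ≤ p then Equiv.swap a (I p) (I q) else I q) = J then (1 : k) else 0)

/-- The Jucys–Murphy operator `X_j^R` on `U_t^{⊗n}`:  on the basis vector `u_I` it acts by
`u_I ↦ ∑_{a : Fin t} u_{I_a}`, where `I_a` is obtained by applying the transposition
`(a, I p)` to all entries at positions `q < p` (the factor at position `p` untouched). -/
def jmR (k : Type*) [Field k] (t n : ℕ) (p : Fin n) :
    ((Fin n → Fin t) → k) →ₗ[k] ((Fin n → Fin t) → k) :=
  ∑ a : Fin t, Matrix.mulVecLin (Matrix.of fun (J I : Fin n → Fin t) =>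
    if (fun q => if q < p then Equiv.swap a (I p) (I q) else I q) = J then (1 : k) else 0)

lemma swap_perm {α : Type*} [DecidableEq α] (σ : Equiv.Perm α) (a x y : α) :
    Equiv.swap (σ a) (σ x) (σ y) = σ (Equiv.swap a x y) := by
  simp only [Equiv.swap_apply_def, EmbeddingLike.apply_eq_iff_eq]
  split_ifs <;> rfl

lemma diagAct_apply (k : Type*) [Field k] (t n : ℕ) (σ : Equiv.Perm (Fin t))
    (v : (Fin n → Fin t) → k) (J : Fin n → Fin t) :
    diagAct k t n σ v J = v (fun q => σ⁻¹ (J q)) := by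
  simp only [diagAct, Matrix.mulVecLin_apply, Matrix.mulVec, dotProduct, Matrix.of_apply]
  rw [Finset.sum_eq_single (fun q => σ⁻¹ (J q))]
  · simp
  · intro I _ hI
    rw [if_neg, zero_mul]
    intro h
    apply hI
    funext q
    have := congrFun h q
    simp [← this]
  · simp

lemma genKey (k : Type*) [Field k] (t n : ℕ) (p : Fin n) (σ : Equiv.Perm (Fin t))
    (c : Fin n → Prop) [DecidablePred c] (v : (Fin n → Fin t) → k) (J : Fin n → Fin t) :
    (∑ a : Fin t, ∑ I : Fin n → Fin t,
      (if (fun q => if c q then Equiv.swap a (I p) (I q) else I q) = J then (1 : k) else 0)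
        * v (fun q => σ⁻¹ (I q)))
    = ∑ a : Fin t, ∑ I : Fin n → Fin t,
      (if (fun q => if c q then Equiv.swap a (I p) (I q) else I q) = (fun q => σ⁻¹ (J q))
        then (1 : k) else 0) * v I := by
  refine (Fintype.sum_equiv σ _ _ fun a => ?_).symm
  refine Fintype.sum_equiv (Equiv.piCongrRight (fun _ : Fin n => σ)) _ _ fun I => ?_
  simp only [Equiv.piCongrRight_apply, Pi.map_apply]
  have h1 : (fun q => σ⁻¹ ((fun i => σ (I i)) q)) = I := by
    funext q; simp
  rw [h1]
  congr 1
  have hcond : ((fun q => if c q then Equiv.swap (σ a) (σ (I p)) (σ (I q)) else σ (I q)) = J)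
      ↔ ((fun q => if c q then Equiv.swap a (I p) (I q) else I q) = fun q => σ⁻¹ (J q)) := by
    rw [funext_iff, funext_iff]
    refine forall_congr' fun q => ?_
    by_cases h : c q <;> simp only [h, if_true, if_false]
    · rw [swap_perm, show σ⁻¹ (J q) = σ.symm (J q) from rfl, ← Equiv.apply_eq_iff_eq_symm_apply]
    · rw [show σ⁻¹ (J q) = σ.symm (J q) from rfl, ← Equiv.apply_eq_iff_eq_symm_apply]
  exact (if_congr hcond rfl rfl).symm

lemma genComm (k : Type*) [Field k] (t n : ℕ) (p : Fin n) (σ : Equiv.Perm (Fin t))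
    (c : Fin n → Prop) [DecidablePred c] (v : (Fin n → Fin t) → k) :
    (∑ a : Fin t, Matrix.mulVecLin (Matrix.of fun (J I : Fin n → Fin t) =>
      if (fun q => if c q then Equiv.swap a (I p) (I q) else I q) = J then (1 : k) else 0))
      (diagAct k t n σ v)
    = diagAct k t n σ
      ((∑ a : Fin t, Matrix.mulVecLin (Matrix.of fun (J I : Fin n → Fin t) =>
      if (fun q => if c q then Equiv.swap a (I p) (I q) else I q) = J then (1 : k) else 0)) v) := by
  funext J
  rw [diagAct_apply]
  simp only [LinearMap.sum_apply, Matrix.mulVecLin_apply, Matrix.mulVec, dotProduct,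
    Matrix.of_apply, Finset.sum_apply]
  rw [← genKey k t n p σ c v J]
  refine Finset.sum_congr rfl fun a _ => Finset.sum_congr rfl fun I _ => ?_
  rw [diagAct_apply]

/-- For every `j` with `1 ≤ j ≤ n` (encoded by the position `p : Fin n`, `j = p + 1`), the
Jucys–Murphy operators `X_j^L` and `X_j^R` commute with the diagonal action of `S_t` on
`U_t^{⊗n}`, i.e. they are endomorphisms of `U_t^{⊗n}` as a representation of `S_t`. -/
theorem stmt5 (k : Type*) [Field k] [CharZero k] (t n : ℕ) (p : Fin n)
    (σ : Equiv.Perm (Fin t)) (v : (Fin n → Fin t) → k) :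
    jmL k t n p (diagAct k t n σ v) = diagAct k t n σ (jmL k t n p v) ∧
    jmR k t n p (diagAct k t n σ v) = diagAct k t n σ (jmR k t n p v) := by
  exact ⟨genComm k t n p σ (fun q => q ≤ p) v, genComm k t n p σ (fun q => q < p) v⟩
end
end

section
/- The 2n Jucys–Murphy operators X_1^L, …, X_n^L, X_1^R, …, X_n^R on U_t^{⊗n} pairwise commute: for all j, j' ∈ {1, …, n}, X_j^L X_{j'}^L = X_{j'}^L X_j^L, X_j^R X_{j'}^R = X_{j'}^R X_j^R, and X_j^L X_{j'}^R = X_{j'}^R X_j^L. (Operator realization of the fact that the elements X_j^L, X_j^R generate a commutative (free polynomial) subalgebra of the affine partition algebra AP_n.) -/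
open scoped Classical

noncomputable section

/-!
Both `X_j^L` and `X_j^R` have the form `X_{S,p} u_I = ∑_a (a i_p)·u_I`, the transposition acting
only on the tensor factors at the positions in `S` (`S = {q ≤ p}`, resp. `{q < p}`).
If `T ⊆ S`, `p ∉ T` and `q ∈ S`, moving `σ = (a i_p)` past `(b i_q)` conjugates the latter:
`σ (b i_q) = (σ b  σ i_q) σ`, and `σ i_q` is the entry at `q` after applying `σ`. So the term
`(a, b)` of `X_{S,p} X_{T,q}` is the term `(σ b, a)` of `X_{T,q} X_{S,p}`, and `b ↦ σ b` is a
bijection. Any two of the `2n` operators, taken in a suitable order, meet these conditions.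
-/

namespace JucysMurphy

theorem mulVecLin_sum {R α m n : Type*} [CommSemiring R] [Fintype α] [Fintype n]
    (M : α → Matrix m n R) : (∑ a, M a).mulVecLin = ∑ a, (M a).mulVecLin := by
  simp only [← Matrix.toLin'_apply', map_sum]

section FunMatrix

variable (R : Type*) [CommSemiring R] {ι : Type*} [DecidableEq ι]

def funMatrix (F : ι → ι) : Matrix ι ι R :=
  Matrix.of fun J I => if F I = J then 1 else 0

variable {R}

theorem funMatrix_mul_funMatrix [Fintype ι] (F G : ι → ι) :
    funMatrix R F * funMatrix R G = funMatrix R (F ∘ G) := by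
  ext J I
  simp only [Matrix.mul_apply, funMatrix, Matrix.of_apply, mul_ite, mul_one, mul_zero,
    Finset.sum_ite_eq, Finset.mem_univ, if_true, Function.comp_apply]

theorem sum_funMatrix_eq_of_equiv {α : Type*} [Fintype α] (F G : α → ι → ι)
    (e : ι → α ≃ α) (h : ∀ x I, F x I = G (e I x) I) :
    ∑ x, funMatrix R (F x) = ∑ x, funMatrix R (G x) := by
  ext J I
  simp only [Matrix.sum_apply, funMatrix, Matrix.of_apply, h]
  exact Fintype.sum_equiv (e I) _ _ fun _ => rfl

end FunMatrix

section SwapEntries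

variable {ι V : Type*} [DecidableEq V]

def swapEntries (S : ι → Prop) [DecidablePred S] (a : V) (p : ι) (I : ι → V) : ι → V :=
  fun r => if S r then Equiv.swap a (I p) (I r) else I r

theorem swapEntries_comp_swapEntries {S T : ι → Prop} [DecidablePred S] [DecidablePred T]
    {p q : ι} (hTS : ∀ r, T r → S r) (hp : ¬ T p) (hq : S q) (a b : V) (I : ι → V) :
    swapEntries S a p (swapEntries T b q I) =
      swapEntries T (Equiv.swap a (I p) b) q (swapEntries S a p I) := by
  funext r
  by_cases hTr : T r
  · simp [swapEntries, hp, hq, hTr, hTS r hTr, Equiv.swap_apply_apply]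
  · by_cases hSr : S r <;> simp [swapEntries, hp, hTr, hSr]

end SwapEntries

section Operators

variable (k : Type*) [Field k] {ι V : Type*} [Fintype ι] [DecidableEq ι] [Fintype V]
  [DecidableEq V]

def jmOp (S : ι → Prop) [DecidablePred S] (p : ι) : Module.End k ((ι → V) → k) :=
  ∑ a : V, (funMatrix k (swapEntries S a p)).mulVecLin

variable {k}

theorem jmOp_commute {S T : ι → Prop} [DecidablePred S] [DecidablePred T] {p q : ι}
    (hTS : ∀ r, T r → S r) (hp : ¬ T p) (hq : S q) :
    Commute (jmOp k (V := V) S p) (jmOp k T q) := by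
  change (jmOp k S p).comp (jmOp k T q) = (jmOp k T q).comp (jmOp k S p)
  simp only [jmOp, ← mulVecLin_sum, ← Matrix.mulVecLin_mul, Finset.sum_mul_sum,
    funMatrix_mul_funMatrix, ← Fintype.sum_prod_type']
  congr 1
  refine sum_funMatrix_eq_of_equiv _ _ (fun I => (Equiv.prodShear (Equiv.refl V)
    fun a => Equiv.swap a (I p)).trans (Equiv.prodComm V V)) fun x I => ?_
  exact swapEntries_comp_swapEntries hTS hp hq x.1 x.2 I

end Operators

theorem jmL_eq_jmOp (k : Type*) [Field k] (t n : ℕ) (p : Fin n) :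
    jmL k t n p = jmOp k (· ≤ p) p := rfl

theorem jmR_eq_jmOp (k : Type*) [Field k] (t n : ℕ) (p : Fin n) :
    jmR k t n p = jmOp k (· < p) p := rfl

theorem commute_of_forall_lt {ι M : Type*} [LinearOrder ι] [Monoid M] (X : ι → M)
    (h : ∀ p q, q < p → Commute (X p) (X q)) (p q : ι) : Commute (X p) (X q) := by
  rcases lt_trichotomy p q with hpq | rfl | hqp
  · exact (h q p hpq).symm
  · exact Commute.refl _
  · exact h p q hqp

end JucysMurphy

open JucysMurphy in
theorem stmt6_general (k : Type*) [Field k] (t n : ℕ) (p q : Fin n) :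
    (jmL k t n p).comp (jmL k t n q) = (jmL k t n q).comp (jmL k t n p) ∧
    (jmR k t n p).comp (jmR k t n q) = (jmR k t n q).comp (jmR k t n p) ∧
    (jmL k t n p).comp (jmR k t n q) = (jmR k t n q).comp (jmL k t n p) := by
  simp only [jmL_eq_jmOp, jmR_eq_jmOp, ← Module.End.mul_eq_comp]
  refine ⟨?_, ?_, ?_⟩
  · exact (commute_of_forall_lt (fun p => jmOp k (V := Fin t) (· ≤ p) p)
      (fun p q h => jmOp_commute (fun r hr => hr.trans h.le) (not_le.2 h) h.le) p q).eq
  · exact (commute_of_forall_lt (fun p => jmOp k (V := Fin t) (· < p) p)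
      (fun p q h => jmOp_commute (fun r hr => hr.trans h) (not_lt.2 h.le) h) p q).eq
  · rcases le_or_gt q p with h | h
    · exact Commute.eq (jmOp_commute (fun r hr => (hr.trans_le h).le) (not_lt.2 h) h)
    · exact Commute.eq (Commute.symm (jmOp_commute (fun r hr => hr.trans_lt h) (not_le.2 h) h))

/-- The `2n` Jucys–Murphy operators `X_1^L, …, X_n^L, X_1^R, …, X_n^R` on `U_t^{⊗n}`
pairwise commute. -/
theorem stmt6 (k : Type*) [Field k] [CharZero k] (t n : ℕ) (p q : Fin n) :
    (jmL k t n p).comp (jmL k t n q) = (jmL k t n q).comp (jmL k t n p) ∧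
    (jmR k t n p).comp (jmR k t n q) = (jmR k t n q).comp (jmR k t n p) ∧
    (jmL k t n p).comp (jmR k t n q) = (jmR k t n q).comp (jmL k t n p) :=
  stmt6_general k t n p q
end
end

section
/- For every v ∈ U_t^{⊗n}, Σ_{j=1}^{n} (X_j^L v − X_j^R v) = Σ_{1 ≤ a < b ≤ t} ((a b)·v − v), where (a b) ∈ S_t denotes the transposition of a and b acting diagonally on U_t^{⊗n}. That is, the central element z_n^{(1)} = Σ_j (x_j^L − x_j^R) of the partition algebra acts on U_t^{⊗n} as the central element Σ_{a<b} ((a b) − 1) of the group algebra kS_t. (Stated in the paper as a lemma, quoting Enyang, Prop. 5.4.) -/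
open scoped Classical

noncomputable section

namespace Stmt7Aux

variable {k : Type*} [Field k] {t n : ℕ}

/-- Apply `σ` to the values of `J` at positions `< m`. -/
def appUpto (σ : Equiv.Perm (Fin t)) (m : ℕ) (J : Fin n → Fin t) : Fin n → Fin t :=
  fun r => if (r : ℕ) < m then σ (J r) else J r

/-- The index map appearing in `jmL`. -/
def Afun (p : Fin n) (J : Fin n → Fin t) (b : Fin t) : Fin n → Fin t :=
  fun q => if q ≤ p then Equiv.swap (J p) b (J q) else J q

/-- The index map appearing in `jmR`. -/
def Bfun (p : Fin n) (J : Fin n → Fin t) (b : Fin t) : Fin n → Fin t :=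
  fun q => if q < p then Equiv.swap (J p) b (J q) else J q

lemma Afun_apply_p (p : Fin n) (J : Fin n → Fin t) (b : Fin t) : Afun p J b p = b := by
  simp [Afun]

lemma iffL (a b : Fin t) (I J : Fin n → Fin t) (p : Fin n) :
    ((fun q => if q ≤ p then Equiv.swap a (I p) (I q) else I q) = J ∧ I p = b)
      ↔ (a = J p ∧ I = Afun p J b) := by
  constructor
  · rintro ⟨hF, rfl⟩
    have ha : a = J p := by
      have h := congrFun hF p
      simp only [le_refl, if_pos, Equiv.swap_apply_right] at h
      exact h
    refine ⟨ha, ?_⟩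
    funext q
    have hq := congrFun hF q
    simp only [Afun]
    by_cases h : q ≤ p
    · rw [if_pos h] at hq ⊢
      rw [← hq, ← ha, Equiv.swap_apply_self]
    · rw [if_neg h] at hq ⊢
      exact hq
  · rintro ⟨rfl, rfl⟩
    have hp : Afun p J b p = b := Afun_apply_p p J b
    refine ⟨?_, hp⟩
    funext q
    by_cases h : q ≤ p
    · simp [Afun, h, hp, Equiv.swap_apply_self]
    · simp [Afun, h]

lemma iffR (a : Fin t) (I J : Fin n → Fin t) (p : Fin n) :
    ((fun q => if q < p then Equiv.swap a (I p) (I q) else I q) = J)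
      ↔ I = Bfun p J a := by
  constructor
  · intro hF
    have hIp : I p = J p := by
      have h := congrFun hF p
      simpa using h
    funext q
    have hq := congrFun hF q
    simp only [Bfun]
    by_cases h : q < p
    · rw [if_pos h] at hq ⊢
      rw [← hq, hIp, Equiv.swap_comm, Equiv.swap_apply_self]
    · rw [if_neg h] at hq ⊢
      exact hq
  · rintro rfl
    have hp : Bfun p J a p = J p := by simp [Bfun]
    funext q
    rw [hp]
    by_cases h : q < p
    · simp only [if_pos h, Bfun, Equiv.swap_comm a (J p)]
      simp [h, Equiv.swap_apply_self]
    · simp [Bfun, h]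

lemma keyL (p : Fin n) (v : (Fin n → Fin t) → k) (J : Fin n → Fin t) :
    jmL k t n p v J = ∑ b : Fin t, v (Afun p J b) := by
  simp only [jmL, LinearMap.coe_sum, Finset.sum_apply, Matrix.mulVecLin_apply,
    Matrix.mulVec, dotProduct, Matrix.of_apply, ite_mul, one_mul, zero_mul]
  have h1 : ∀ a : Fin t, ∀ I : Fin n → Fin t,
      (if (fun q => if q ≤ p then Equiv.swap a (I p) (I q) else I q) = J then v I else 0)
        = ∑ b : Fin t, if a = J p ∧ I = Afun p J b then v I else 0 := by
    intro a I
    rw [Finset.sum_eq_single (I p)]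
    · have h2 : ((fun q => if q ≤ p then Equiv.swap a (I p) (I q) else I q) = J)
          ↔ (a = J p ∧ I = Afun p J (I p)) := by
        rw [← iffL a (I p) I J p]
        simp
      simp only [h2]
    · intro b _ hb
      rw [if_neg]
      rintro ⟨-, rfl⟩
      exact hb (Afun_apply_p p J b).symm
    · simp
  simp only [h1]
  have h3 : ∀ a : Fin t,
      (∑ I : Fin n → Fin t, ∑ b : Fin t, (if a = J p ∧ I = Afun p J b then v I else 0))
        = ∑ b : Fin t, if a = J p then v (Afun p J b) else 0 := by
    intro a
    rw [Finset.sum_comm]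
    refine Finset.sum_congr rfl fun b _ => ?_
    by_cases ha : a = J p <;> simp [ha, Finset.sum_ite_eq']
  simp only [h3]
  rw [Finset.sum_comm]
  refine Finset.sum_congr rfl fun b _ => ?_
  simp [Finset.sum_ite_eq']

lemma keyR (p : Fin n) (v : (Fin n → Fin t) → k) (J : Fin n → Fin t) :
    jmR k t n p v J = ∑ b : Fin t, v (Bfun p J b) := by
  simp only [jmR, LinearMap.coe_sum, Finset.sum_apply, Matrix.mulVecLin_apply,
    Matrix.mulVec, dotProduct, Matrix.of_apply, ite_mul, one_mul, zero_mul]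
  refine Finset.sum_congr rfl fun a _ => ?_
  simp only [iffR]
  simp [Finset.sum_ite_eq']

lemma diag_apply (σ : Equiv.Perm (Fin t)) (v : (Fin n → Fin t) → k) (J : Fin n → Fin t) :
    diagAct k t n σ v J = v (fun r => σ⁻¹ (J r)) := by
  simp only [diagAct, Matrix.mulVecLin_apply, Matrix.mulVec, dotProduct, Matrix.of_apply,
    ite_mul, one_mul, zero_mul]
  have h : ∀ I : Fin n → Fin t, ((fun p => σ (I p)) = J) ↔ I = fun r => σ⁻¹ (J r) := by
    intro I
    constructor
    · intro h
      funext r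
      have := congrFun h r
      simp [← this]
    · rintro rfl
      funext r
      simp
  simp only [h]
  simp [Finset.sum_ite_eq']

/-- Summation over ordered pairs reduces to a single sum when only pairs containing `c`
contribute. -/
lemma pair_to_single {M : Type*} [AddCommGroup M] (c : Fin t) (G : Fin t → M)
    (F : Fin t × Fin t → M) (hc : G c = 0)
    (h1 : ∀ d, F (c, d) = G d) (h2 : ∀ d, F (d, c) = G d)
    (h0 : ∀ a b, a ≠ c → b ≠ c → F (a, b) = 0) :
    ∑ q ∈ Finset.univ.filter (fun q : Fin t × Fin t => q.1 < q.2), F q = ∑ d : Fin t, G d := by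
  rw [Finset.sum_filter, Fintype.sum_prod_type]
  have key : ∀ a b : Fin t, (if a < b then F (a, b) else 0)
      = (if a = c ∧ c < b then G b else 0) + (if b = c ∧ a < c then G a else 0) := by
    intro a b
    by_cases hac : a = c
    · subst hac
      by_cases hbc : b = a
      · subst hbc
        simp [hc]
      · simp [h1, hbc, fun h : b = a => hbc h]
    · by_cases hbc : b = c
      · subst hbc
        simp [h2, hac]
      · simp [h0 a b hac hbc, hac, hbc]
  simp only [key, Finset.sum_add_distrib]
  have e1 : (∑ a : Fin t, ∑ b : Fin t, (if a = c ∧ c < b then G b else 0))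
      = ∑ d : Fin t, if c < d then G d else 0 := by
    rw [Finset.sum_comm]
    refine Finset.sum_congr rfl fun b _ => ?_
    simp only [ite_and]
    simp [Finset.sum_ite_eq']
  have e2 : (∑ a : Fin t, ∑ b : Fin t, (if b = c ∧ a < c then G a else 0))
      = ∑ d : Fin t, if d < c then G d else 0 := by
    refine Finset.sum_congr rfl fun a _ => ?_
    simp only [ite_and]
    simp [Finset.sum_ite_eq']
  rw [e1, e2, ← Finset.sum_add_distrib]
  refine Finset.sum_congr rfl fun d _ => ?_
  rcases lt_trichotomy c d with h | h | h
  · simp [h, lt_asymm h]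
  · subst h
    simp [hc]
  · simp [h, lt_asymm h]

lemma Afun_eq (m : ℕ) (hmn : m < n) (J : Fin n → Fin t) (b : Fin t) :
    Afun ⟨m, hmn⟩ J b = appUpto (Equiv.swap (J ⟨m, hmn⟩) b) (m + 1) J := by
  funext q
  simp only [Afun, appUpto]
  have : q ≤ (⟨m, hmn⟩ : Fin n) ↔ (q : ℕ) < m + 1 := by
    rw [Fin.le_def, Nat.lt_succ_iff]
  by_cases h : (q : ℕ) < m + 1 <;> simp [this, h]

lemma Bfun_eq (m : ℕ) (hmn : m < n) (J : Fin n → Fin t) (b : Fin t) :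
    Bfun ⟨m, hmn⟩ J b = appUpto (Equiv.swap (J ⟨m, hmn⟩) b) m J := by
  funext q
  simp only [Bfun, appUpto]
  have : q < (⟨m, hmn⟩ : Fin n) ↔ (q : ℕ) < m := by
    rw [Fin.lt_def]
  by_cases h : (q : ℕ) < m <;> simp [this, h]

lemma step (v : (Fin n → Fin t) → k) (J : Fin n → Fin t) (m : ℕ) (hmn : m < n) :
    (∑ b : Fin t, v (Afun ⟨m, hmn⟩ J b)) - (∑ b : Fin t, v (Bfun ⟨m, hmn⟩ J b))
      = ∑ q ∈ Finset.univ.filter (fun q : Fin t × Fin t => q.1 < q.2),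
          (v (appUpto (Equiv.swap q.1 q.2) (m + 1) J) - v (appUpto (Equiv.swap q.1 q.2) m J)) := by
  set c : Fin t := J ⟨m, hmn⟩ with hc
  rw [pair_to_single c
    (fun b => v (appUpto (Equiv.swap c b) (m + 1) J) - v (appUpto (Equiv.swap c b) m J))
    (fun q => v (appUpto (Equiv.swap q.1 q.2) (m + 1) J) - v (appUpto (Equiv.swap q.1 q.2) m J))]
  · rw [← Finset.sum_sub_distrib]
    refine Finset.sum_congr rfl fun b _ => ?_
    rw [Afun_eq m hmn J b, Bfun_eq m hmn J b]
  · have hrefl : ∀ m' : ℕ, appUpto (n := n) (Equiv.refl (Fin t)) m' J = J := by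
      intro m'; funext r; simp [appUpto]
    simp [Equiv.swap_self, hrefl]
  · intro d; rfl
  · intro d
    rw [Equiv.swap_comm]
  · intro a b ha hb
    have : appUpto (Equiv.swap a b) (m + 1) J = appUpto (Equiv.swap a b) m J := by
      funext r
      simp only [appUpto]
      by_cases h : (r : ℕ) < m
      · simp [h, Nat.lt_succ_of_lt h]
      · by_cases h2 : (r : ℕ) < m + 1
        · have hval : (r : ℕ) = m := by omega
          have hr : r = ⟨m, hmn⟩ := Fin.ext (by simp [hval])
          subst hr
          rw [if_pos h2, if_neg h, Equiv.swap_apply_of_ne_of_ne (Ne.symm ha) (Ne.symm hb)]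
        · simp [h, h2]
    rw [this, sub_self]

lemma main_ind (v : (Fin n → Fin t) → k) (J : Fin n → Fin t) :
    ∀ m : ℕ, m ≤ n →
      (∑ p ∈ Finset.univ.filter (fun p : Fin n => (p : ℕ) < m),
        ((∑ b : Fin t, v (Afun p J b)) - ∑ b : Fin t, v (Bfun p J b)))
      = ∑ q ∈ Finset.univ.filter (fun q : Fin t × Fin t => q.1 < q.2),
          (v (appUpto (Equiv.swap q.1 q.2) m J) - v J) := by
  intro m
  induction m with
  | zero =>
    intro _
    have h0 : ∀ σ : Equiv.Perm (Fin t), appUpto (n := n) σ 0 J = J := by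
      intro σ; funext r; simp [appUpto]
    simp [h0]
  | succ m ih =>
    intro hm
    have hmn : m < n := hm
    have hfilter : Finset.univ.filter (fun p : Fin n => (p : ℕ) < m + 1)
        = insert (⟨m, hmn⟩ : Fin n) (Finset.univ.filter (fun p : Fin n => (p : ℕ) < m)) := by
      ext p
      simp only [Finset.mem_insert, Finset.mem_filter, Finset.mem_univ, true_and,
        Nat.lt_succ_iff_lt_or_eq, Fin.ext_iff]
      tauto
    rw [hfilter, Finset.sum_insert (by simp), ih (le_of_lt hmn),
      step v J m hmn, ← Finset.sum_add_distrib]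
    refine Finset.sum_congr rfl fun q _ => ?_
    ring

end Stmt7Aux

/-- `∑_{j=1}^n (X_j^L v − X_j^R v) = ∑_{a<b} ((a b)·v − v)`:  the central element
`z_n^{(1)} = ∑_j (x_j^L − x_j^R)` of the partition algebra acts on `U_t^{⊗n}` as the central
element `∑_{a<b} ((a b) − 1)` of the group algebra `kS_t`. -/
theorem stmt7 (k : Type*) [Field k] [CharZero k] (t n : ℕ) (v : (Fin n → Fin t) → k) :
    ∑ p : Fin n, (jmL k t n p v - jmR k t n p v)
      = ∑ q ∈ Finset.univ.filter (fun q : Fin t × Fin t => q.1 < q.2),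
          (diagAct k t n (Equiv.swap q.1 q.2) v - v) := by
  funext J
  rw [Finset.sum_apply, Finset.sum_apply]
  have lhs_eq : ∀ p : Fin n, (jmL k t n p v - jmR k t n p v) J
      = (∑ b : Fin t, v (Stmt7Aux.Afun p J b)) - ∑ b : Fin t, v (Stmt7Aux.Bfun p J b) := by
    intro p
    rw [Pi.sub_apply, Stmt7Aux.keyL, Stmt7Aux.keyR]
  have rhs_eq : ∀ q : Fin t × Fin t, (diagAct k t n (Equiv.swap q.1 q.2) v - v) J
      = v (Stmt7Aux.appUpto (Equiv.swap q.1 q.2) n J) - v J := by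
    intro q
    rw [Pi.sub_apply, Stmt7Aux.diag_apply]
    congr 2
    funext r
    simp [Stmt7Aux.appUpto, r.isLt, Equiv.swap_inv]
  simp only [lhs_eq]
  rw [show (Finset.univ : Finset (Fin n))
      = Finset.univ.filter (fun p : Fin n => (p : ℕ) < n) by
    ext p; simp [p.isLt]]
  rw [Stmt7Aux.main_ind v J n le_rfl]
  exact (Finset.sum_congr rfl fun q _ => (rhs_eq q).symm)
end
end

section
/- For every partition λ and every natural number N at least the number of nonzero parts of λ, the weight wt_t(λ) satisfies the closed formula wt_t(λ) = (ε_{t−|λ|} − ε_t) + Σ_{r=1}^{N} (ε_{λ_r − r} − ε_{−r}) in the free abelian group P. (The identity (5.12) in Lemma 5.5 of the paper.) -/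
noncomputable section

/-- The basis element `Λ_c` of the free abelian group `P = (k →₀ ℤ)`. -/
def LamB (k : Type*) [Field k] (c : k) : k →₀ ℤ := Finsupp.single c 1

/-- `ε_c := Λ_c − Λ_{c+1}`. -/
def epsB (k : Type*) [Field k] (c : k) : k →₀ ℤ := LamB k c - LamB k (c + 1)

/-- `α_c := ε_c − ε_{c−1}`. -/
def alphaB (k : Type*) [Field k] (c : k) : k →₀ ℤ := epsB k c - epsB k (c - 1)

/-- The size `|λ|` of a partition, encoded as a finitely supported function `ℕ →₀ ℕ`
(`lam r` is the `(r+1)`-st part `λ_{r+1}`). -/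
def partSize (lam : ℕ →₀ ℕ) : ℕ := lam.sum fun _ m => m

/-- The weight `wt_t(λ) = ∑_{(i,j) ∈ λ} α_{j−i} − ∑_{i=1}^{|λ|} α_{t−i+1} ∈ P`, the first sum
over the cells of the Young diagram of `λ` (row `r+1` has cells in columns `1, …, λ_{r+1}`,
the cell in row `r+1`, column `c+1` having content `c − r`). -/
def wtP (k : Type*) [Field k] (t : k) (lam : ℕ →₀ ℕ) : k →₀ ℤ :=
  (∑ r ∈ lam.support, ∑ c ∈ Finset.range (lam r), alphaB k ((c : k) - (r : k)))
    - ∑ i ∈ Finset.range (partSize lam), alphaB k (t - (i : k))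

lemma epsB_congr (k : Type*) [Field k] {a b : k} (h : a = b) : epsB k a = epsB k b := by
  rw [h]

lemma tele_up (k : Type*) [Field k] (m : ℕ) (f : k) :
    ∑ c ∈ Finset.range m, alphaB k ((c : k) + f)
      = epsB k ((m : k) + f - 1) - epsB k (f - 1) := by
  induction m with
  | zero => simp
  | succ n ih =>
    rw [Finset.sum_range_succ, ih, alphaB]
    push_cast
    rw [show ((n : k) + 1 + f - 1) = (n : k) + f by ring]
    abel

lemma tele_down (k : Type*) [Field k] (n : ℕ) (t : k) :
    ∑ i ∈ Finset.range n, alphaB k (t - (i : k))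
      = epsB k t - epsB k (t - (n : k)) := by
  induction n with
  | zero => simp
  | succ m ih =>
    rw [Finset.sum_range_succ, ih, alphaB]
    push_cast
    rw [show (t - (m : k) - 1) = t - ((m : k) + 1) by ring]
    abel

/-- For every partition `λ` and every `N` at least the number of nonzero parts of `λ`,
`wt_t(λ) = (ε_{t−|λ|} − ε_t) + ∑_{r=1}^{N} (ε_{λ_r − r} − ε_{−r})`. -/
theorem stmt10 (k : Type*) [Field k] [CharZero k] (t : k) (lam : ℕ →₀ ℕ)
    (hmono : Antitone ⇑lam) (N : ℕ) (hN : lam.support.card ≤ N) :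
    wtP k t lam
      = (epsB k (t - (partSize lam : k)) - epsB k t)
        + ∑ r ∈ Finset.range N,
            (epsB k ((lam r : k) - ((r : k) + 1)) - epsB k (-((r : k) + 1))) := by
  have hsub : lam.support ⊆ Finset.range N := by
    intro r hr
    have h1 : Finset.range (r + 1) ⊆ lam.support := by
      intro j hj
      simp only [Finset.mem_range] at hj
      have : lam r ≤ lam j := hmono (Nat.lt_succ_iff.mp hj)
      have hr' : lam r ≠ 0 := Finsupp.mem_support_iff.mp hr
      exact Finsupp.mem_support_iff.mpr (by omega)
    have := Finset.card_le_card h1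
    simp only [Finset.card_range] at this
    exact Finset.mem_range.mpr (by omega)
  have hrow : ∑ r ∈ lam.support, ∑ c ∈ Finset.range (lam r), alphaB k ((c : k) - (r : k))
      = ∑ r ∈ Finset.range N,
          (epsB k ((lam r : k) - ((r : k) + 1)) - epsB k (-((r : k) + 1))) := by
    rw [Finset.sum_subset hsub]
    · refine Finset.sum_congr rfl fun r _ => ?_
      have : ∀ c ∈ Finset.range (lam r),
          alphaB k ((c : k) - (r : k)) = alphaB k ((c : k) + (-(r : k))) := by
        intro c _; ring_nf
      rw [Finset.sum_congr rfl this, tele_up]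
      rw [epsB_congr k (show ((lam r : k) + -(r : k) - 1) = (lam r : k) - ((r : k) + 1) by ring),
        epsB_congr k (show (-(r : k) - 1) = -((r : k) + 1) by ring)]
    · intro r _ hr
      have : lam r = 0 := Finsupp.notMem_support_iff.mp hr
      simp [this]
  rw [wtP, hrow, tele_down]
  abel
end
end

section
/- For partitions λ and μ, one has wt_t(λ) = wt_t(μ) if and only if λ ∼_t μ, i.e. if and only if the sequences (t−|λ|, λ_1−1, λ_2−2, λ_3−3, …) and (t−|μ|, μ_1−1, μ_2−2, …), with entries in k, are rearrangements of each other. (The final assertion of Lemma 5.5 of the paper.) -/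
noncomputable section

/-- The sequence `s_t(λ) = (t−|λ|, λ_1−1, λ_2−2, …)` with entries in `k`. -/
def seqP (k : Type*) [Field k] (t : k) (lam : ℕ →₀ ℕ) : ℕ → k
  | 0 => t - (partSize lam : k)
  | i + 1 => (lam i : k) - ((i : k) + 1)

namespace AuxStmt11

open scoped Classical

variable {k : Type*} [Field k] [CharZero k]

/-- Telescoping of a row sum. -/
lemma telA (y : k) (m : ℕ) :
    ∑ c ∈ Finset.range m, alphaB k ((c : k) - y)
      = epsB k ((m : k) - 1 - y) - epsB k (-1 - y) := by
  induction m with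
  | zero => simp
  | succ m ih =>
    rw [Finset.sum_range_succ, ih, alphaB]
    have h1 : ((m + 1 : ℕ) : k) - 1 - y = (m : k) - y := by push_cast; ring
    have h2 : ((m : k) - y) - 1 = (m : k) - 1 - y := by ring
    rw [h1, h2]
    abel

/-- Telescoping of the correction sum. -/
lemma telB (x : k) (n : ℕ) :
    ∑ i ∈ Finset.range n, alphaB k (x - (i : k))
      = epsB k x - epsB k (x - (n : k)) := by
  induction n with
  | zero => simp
  | succ n ih =>
    rw [Finset.sum_range_succ, ih, alphaB]
    have h1 : x - ((n + 1 : ℕ) : k) = x - (n : k) - 1 := by push_cast; ring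
    rw [h1]
    abel

/-- Closed form of `wtP` in terms of the `ε`'s along the sequence `seqP`. -/
lemma wtP_closed (t : k) (lam : ℕ →₀ ℕ) (N : ℕ) (hN : ∀ r, N ≤ r → lam r = 0) :
    wtP k t lam = (∑ i ∈ Finset.range (N + 1), epsB k (seqP k t lam i))
      - (∑ r ∈ Finset.range N, epsB k (-1 - (r : k))) - epsB k t := by
  have hsub : lam.support ⊆ Finset.range N := by
    intro r hr
    rw [Finset.mem_range]
    by_contra h
    exact (Finsupp.mem_support_iff.mp hr) (hN r (by omega))
  have h1 : (∑ r ∈ lam.support, ∑ c ∈ Finset.range (lam r), alphaB k ((c : k) - (r : k)))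
      = ∑ r ∈ Finset.range N,
          (epsB k ((lam r : k) - 1 - (r : k)) - epsB k (-1 - (r : k))) := by
    rw [Finset.sum_congr rfl (fun (r : ℕ) _ => telA (r : k) (lam r))]
    refine Finset.sum_subset hsub ?_
    intro r _ hr
    have h0 : lam r = 0 := Finsupp.notMem_support_iff.mp hr
    rw [h0]
    have : ((0 : ℕ) : k) - 1 - (r : k) = -1 - (r : k) := by push_cast; ring
    rw [this, sub_self]
  rw [wtP, h1, telB t (partSize lam)]
  rw [Finset.sum_range_succ']
  have h2 : ∀ r ∈ Finset.range N,
      epsB k (seqP k t lam (r + 1)) = epsB k ((lam r : k) - 1 - (r : k)) := by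
    intro r _
    show epsB k ((lam r : k) - ((r : k) + 1)) = _
    congr 1; ring
  rw [Finset.sum_congr rfl h2, Finset.sum_sub_distrib]
  show _ = (∑ r ∈ Finset.range N, epsB k ((lam r : k) - 1 - (r : k))
      + epsB k (seqP k t lam 0)) - _ - _
  show _ = _ - _ - epsB k t
  have : seqP k t lam 0 = t - (partSize lam : k) := rfl
  rw [this]
  abel

/-- Count of indices `i < n` with `f i = v`, as an integer. -/
def cnt (n : ℕ) (f : ℕ → k) (v : k) : ℤ :=
  (((Finset.range n).filter (fun i => f i = v)).card : ℤ)

lemma epsB_apply (c x : k) :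
    epsB k c x = (if c = x then (1 : ℤ) else 0) - (if c = x - 1 then (1 : ℤ) else 0) := by
  rw [epsB, LamB, LamB, Finsupp.sub_apply, Finsupp.single_apply, Finsupp.single_apply]
  congr 1
  by_cases h : c = x - 1
  · rw [if_pos h, if_pos (by rw [h]; ring)]
  · rw [if_neg (fun hc => h (by rw [← hc]; ring)), if_neg h]

lemma sum_eps_apply (n : ℕ) (f : ℕ → k) (x : k) :
    (∑ i ∈ Finset.range n, epsB k (f i)) x = cnt n f x - cnt n f (x - 1) := by
  rw [Finset.sum_apply']
  rw [Finset.sum_congr rfl (fun (i : ℕ) _ => epsB_apply (f i) x), Finset.sum_sub_distrib,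
    Finset.sum_boole, Finset.sum_boole]
  rw [cnt, cnt]

lemma cnt_eq_zero (n : ℕ) (f : ℕ → k) (x : k)
    (hx : x ∉ (Finset.range n).image f) : cnt n f x = 0 := by
  rw [cnt, Nat.cast_eq_zero, Finset.card_eq_zero, Finset.filter_eq_empty_iff]
  intro i hi hfi
  exact hx (Finset.mem_image.mpr ⟨i, hi, hfi⟩)

/-- Linear independence of the `ε`'s: equal `ε`-sums give equal counts. -/
lemma eps_sum_eq_iff (n : ℕ) (f g : ℕ → k) :
    (∑ i ∈ Finset.range n, epsB k (f i)) = (∑ i ∈ Finset.range n, epsB k (g i)) ↔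
    ∀ v : k, ((Finset.range n).filter (fun i => f i = v)).card
      = ((Finset.range n).filter (fun i => g i = v)).card := by
  constructor
  · intro h v
    set D : k → ℤ := fun x => cnt n f x - cnt n g x with hD
    have hstep : ∀ x : k, D x = D (x - 1) := by
      intro x
      have h1 := congrFun (congrArg (DFunLike.coe) h) x
      rw [sum_eps_apply, sum_eps_apply] at h1
      simp only [hD]
      linarith
    have hsucc : ∀ x : k, D (x + 1) = D x := by
      intro x
      have h' := hstep (x + 1)
      rw [add_sub_cancel_right] at h'
      exact h'
    have hiter : ∀ (m : ℕ) (x : k), D (x + m) = D x := by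
      intro m
      induction m with
      | zero => intro x; simp
      | succ m ih =>
        intro x
        have h1 : x + ((m + 1 : ℕ) : k) = (x + (m : ℕ)) + 1 := by push_cast; ring
        rw [h1, hsucc, ih]
    have hzero : ∀ x : k, D x = 0 := by
      intro x
      have hinj : Function.Injective (fun m : ℕ => x + (m : k)) := by
        intro a b hab
        simp only at hab
        exact Nat.cast_injective (add_left_cancel hab)
      have hinf : (Set.range (fun m : ℕ => x + (m : k))).Infinite :=
        Set.infinite_range_of_injective hinj
      obtain ⟨y, hy, hyS⟩ := hinf.exists_notMem_finset
        ((Finset.range n).image f ∪ (Finset.range n).image g)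
      obtain ⟨m, rfl⟩ := hy
      have hf := cnt_eq_zero n f _ (fun hc => hyS (Finset.mem_union_left _ hc))
      have hg := cnt_eq_zero n g _ (fun hc => hyS (Finset.mem_union_right _ hc))
      have := hiter m x
      simp only [hD] at this ⊢
      rw [hf, hg] at this
      linarith
    have := hzero v
    simp only [hD, cnt, sub_eq_zero] at this
    exact_mod_cast this
  · intro h
    have hmul : ((Finset.range n).val.map f) = ((Finset.range n).val.map g) := by
      apply Multiset.ext.mpr
      intro v
      rw [Multiset.count_map, Multiset.count_map]
      have e : ∀ h' : ℕ → k,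
          Multiset.card (Multiset.filter (fun a => v = h' a) (Finset.range n).val)
          = ((Finset.range n).filter (fun i => h' i = v)).card := by
        intro h'
        rw [Finset.card, Finset.filter_val]
        congr 1
        apply Multiset.filter_congr
        intro i _
        exact eq_comm
      rw [e f, e g]
      exact h v
    calc (∑ i ∈ Finset.range n, epsB k (f i))
        = (((Finset.range n).val.map f).map (epsB k)).sum := by
          rw [Multiset.map_map]; rfl
      _ = (((Finset.range n).val.map g).map (epsB k)).sum := by rw [hmul]
      _ = (∑ i ∈ Finset.range n, epsB k (g i)) := by
          rw [Multiset.map_map]; rfl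

/-- Reduction of the fiber-cardinality condition on `ℕ` to a finite range,
given that the two sequences agree from `M` on and tail fibers are finite. -/
lemma fiber_split (M : ℕ) (f g : ℕ → k) (hfg : ∀ i, M ≤ i → f i = g i)
    (htail : ∀ v : k, {i : ℕ | M ≤ i ∧ f i = v}.Finite) :
    (∀ v : k, {i : ℕ | f i = v}.ncard = {i : ℕ | g i = v}.ncard) ↔
    ∀ v : k, ((Finset.range M).filter (fun i => f i = v)).card
      = ((Finset.range M).filter (fun i => g i = v)).card := by
  have key : ∀ (h : ℕ → k), (∀ i, M ≤ i → h i = g i) →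
      (∀ v : k, {i : ℕ | M ≤ i ∧ h i = v}.Finite) →
      ∀ v : k, {i : ℕ | h i = v}.ncard
        = ((Finset.range M).filter (fun i => h i = v)).card
          + {i : ℕ | M ≤ i ∧ g i = v}.ncard := by
    intro h hhg hfin v
    have hsplit : {i : ℕ | h i = v}
        = ↑((Finset.range M).filter (fun i => h i = v)) ∪ {i : ℕ | M ≤ i ∧ h i = v} := by
      ext i
      simp only [Set.mem_setOf_eq, Set.mem_union, Finset.coe_filter, Finset.mem_range,
        Set.mem_setOf_eq]
      constructor
      · intro hi
        rcases lt_or_ge i M with h' | h'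
        · exact Or.inl ⟨h', hi⟩
        · exact Or.inr ⟨h', hi⟩
      · rintro (⟨_, hi⟩ | ⟨_, hi⟩) <;> exact hi
    have hdisj : Disjoint (↑((Finset.range M).filter (fun i => h i = v)) : Set ℕ)
        {i : ℕ | M ≤ i ∧ h i = v} := by
      rw [Set.disjoint_left]
      intro i hi hi'
      simp only [Finset.coe_filter, Finset.mem_range, Set.mem_setOf_eq] at hi
      exact absurd hi'.1 (by omega)
    have heq2 : {i : ℕ | M ≤ i ∧ h i = v} = {i : ℕ | M ≤ i ∧ g i = v} := by
      ext i
      simp only [Set.mem_setOf_eq]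
      constructor
      · rintro ⟨h1, h2⟩; exact ⟨h1, (hhg i h1) ▸ h2⟩
      · rintro ⟨h1, h2⟩; exact ⟨h1, (hhg i h1).symm ▸ h2⟩
    rw [hsplit, Set.ncard_union_eq hdisj (Finset.finite_toSet _) (hfin v),
      Set.ncard_coe_finset, heq2]
  have htailg : ∀ v : k, {i : ℕ | M ≤ i ∧ g i = v}.Finite := by
    intro v
    have : {i : ℕ | M ≤ i ∧ g i = v} = {i : ℕ | M ≤ i ∧ f i = v} := by
      ext i
      simp only [Set.mem_setOf_eq]
      constructor
      · rintro ⟨h1, h2⟩; exact ⟨h1, (hfg i h1).symm ▸ h2⟩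
      · rintro ⟨h1, h2⟩; exact ⟨h1, (hfg i h1) ▸ h2⟩
    rw [this]; exact htail v
  have kf := key f hfg htail
  have kg := key g (fun i _ => rfl) htailg
  constructor
  · intro h v
    have := h v
    rw [kf v, kg v] at this
    omega
  · intro h v
    rw [kf v, kg v, h v]

end AuxStmt11

/-- `wt_t(λ) = wt_t(μ)` if and only if `λ ∼_t μ`, i.e. iff the sequences
`(t−|λ|, λ_1−1, λ_2−2, …)` and `(t−|μ|, μ_1−1, μ_2−2, …)` are rearrangements of each other
(for every `v ∈ k` the fibers have the same finite cardinality). -/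
theorem stmt11 (k : Type*) [Field k] [CharZero k] (t : k) (lam mu : ℕ →₀ ℕ)
    (hl : Antitone ⇑lam) (hm : Antitone ⇑mu) :
    wtP k t lam = wtP k t mu ↔
      ∀ v : k, {i : ℕ | seqP k t lam i = v}.ncard = {i : ℕ | seqP k t mu i = v}.ncard := by
  classical
  obtain ⟨N1, hN1⟩ := lam.support.exists_nat_subset_range
  obtain ⟨N2, hN2⟩ := mu.support.exists_nat_subset_range
  set N := max N1 N2 with hNdef
  have hlam0 : ∀ r, N ≤ r → lam r = 0 := by
    intro r hr
    by_contra h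
    have := hN1 (Finsupp.mem_support_iff.mpr h)
    rw [Finset.mem_range] at this
    omega
  have hmu0 : ∀ r, N ≤ r → mu r = 0 := by
    intro r hr
    by_contra h
    have := hN2 (Finsupp.mem_support_iff.mpr h)
    rw [Finset.mem_range] at this
    omega
  rw [AuxStmt11.wtP_closed t lam N hlam0, AuxStmt11.wtP_closed t mu N hmu0]
  have hfg : ∀ i, N + 1 ≤ i → seqP k t lam i = seqP k t mu i := by
    intro i hi
    match i with
    | 0 => omega
    | j + 1 =>
      show (lam j : k) - _ = (mu j : k) - _
      rw [hlam0 j (by omega), hmu0 j (by omega)]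
  have htail : ∀ v : k, {i : ℕ | N + 1 ≤ i ∧ seqP k t lam i = v}.Finite := by
    intro v
    apply Set.Subsingleton.finite
    intro a ha b hb
    simp only [Set.mem_setOf_eq] at ha hb
    obtain ⟨ha1, ha2⟩ := ha
    obtain ⟨hb1, hb2⟩ := hb
    have hval : ∀ i, N + 1 ≤ i → seqP k t lam i = -(i : k) := by
      intro i hi
      match i with
      | 0 => omega
      | j + 1 =>
        show (lam j : k) - ((j : k) + 1) = _
        rw [hlam0 j (by omega)]
        push_cast
        ring
    rw [hval a ha1] at ha2
    rw [hval b hb1] at hb2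
    have : (a : k) = (b : k) := neg_injective (ha2.trans hb2.symm)
    exact_mod_cast this
  rw [AuxStmt11.fiber_split (N + 1) _ _ hfg htail]
  rw [← AuxStmt11.eps_sum_eq_iff (N + 1) (seqP k t lam) (seqP k t mu)]
  constructor
  · intro h
    have h1 := sub_left_injective h
    exact sub_left_injective h1
  · intro h
    rw [h]
end
end

section
/- Let k be a field of characteristic zero and t ∈ k an element that is not equal to the image of any natural number. Then every partition is typical for t: for all partitions λ, μ, if λ ∼_t μ then λ = μ. (The first assertion of Theorem 5.6 (Comes–Ostrik) of the paper.) -/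
noncomputable section

open Classical

lemma eq_zero_of_partSize_le {lam : ℕ →₀ ℕ} (hl : Antitone ⇑lam) {i : ℕ}
    (hi : partSize lam ≤ i) : lam i = 0 := by
  by_contra h
  have hpos : ∀ j ≤ i, 1 ≤ lam j := fun j hj =>
    Nat.one_le_iff_ne_zero.mpr (fun h0 => h (Nat.le_antisymm (h0 ▸ hl hj) (Nat.zero_le _)))
  have hsub : Finset.range (i + 1) ⊆ lam.support := by
    intro j hj
    simp only [Finset.mem_range] at hj
    simp only [Finsupp.mem_support_iff]
    exact Nat.one_le_iff_ne_zero.mp (hpos j (Nat.lt_succ_iff.mp hj))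
  have h1 : i + 1 ≤ ∑ j ∈ Finset.range (i + 1), lam j := by
    calc i + 1 = ∑ _j ∈ Finset.range (i + 1), 1 := by simp
    _ ≤ _ := Finset.sum_le_sum fun j hj => hpos j (Nat.lt_succ_iff.mp (Finset.mem_range.mp hj))
  have h2 : ∑ j ∈ Finset.range (i + 1), lam j ≤ partSize lam := by
    rw [partSize, Finsupp.sum]
    exact Finset.sum_le_sum_of_subset hsub
  omega

lemma F_strictAnti {lam : ℕ →₀ ℕ} (hl : Antitone ⇑lam) :
    StrictAnti (fun i : ℕ => (lam i : ℤ) - (i + 1)) := by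
  intro a b hab
  have h1 : lam b ≤ lam a := hl hab.le
  simp only
  omega

lemma tail_subsingleton {k : Type*} [Field k] [CharZero k] {lam : ℕ →₀ ℕ}
    (hl : Antitone ⇑lam) (v : k) :
    {i : ℕ | (lam i : k) - ((i : k) + 1) = v}.Subsingleton := by
  intro a ha b hb
  simp only [Set.mem_setOf_eq] at ha hb
  have hZ : ((lam a : ℤ) - (a + 1) : ℤ) = ((lam b : ℤ) - (b + 1) : ℤ) := by
    have : ((((lam a : ℤ) - (a + 1) : ℤ)) : k) = ((((lam b : ℤ) - (b + 1) : ℤ)) : k) := by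
      push_cast
      rw [ha, hb]
    exact_mod_cast this
  exact (F_strictAnti hl).injective hZ

lemma ncard_seqP (k : Type*) [Field k] [CharZero k] (t : k) (lam : ℕ →₀ ℕ)
    (hl : Antitone ⇑lam) (v : k) :
    {i : ℕ | seqP k t lam i = v}.ncard =
      (if t - (partSize lam : k) = v then 1 else 0) +
      (if ∃ i : ℕ, (lam i : k) - ((i : k) + 1) = v then 1 else 0) := by
  by_cases h0 : t - (partSize lam : k) = v
  · rcases Set.eq_empty_or_nonempty {i : ℕ | (lam i : k) - ((i : k) + 1) = v} with hT | ⟨a, ha⟩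
    · have hx : ¬ ∃ i : ℕ, (lam i : k) - ((i : k) + 1) = v := by
        rintro ⟨i, hi⟩
        exact Set.eq_empty_iff_forall_notMem.mp hT i hi
      have hS : {i : ℕ | seqP k t lam i = v} = {0} := by
        ext i
        cases i with
        | zero => simpa [seqP] using h0
        | succ n =>
          simp only [Set.mem_setOf_eq, seqP, Set.mem_singleton_iff]
          constructor
          · intro h; exact absurd ⟨n, h⟩ hx
          · intro h; exact absurd h (Nat.succ_ne_zero n)
      rw [hS, if_pos h0, if_neg hx, Set.ncard_singleton]
    · have hTa : {i : ℕ | (lam i : k) - ((i : k) + 1) = v} = {a} :=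
        (tail_subsingleton hl v).eq_singleton_of_mem ha
      have haa : (lam a : k) - ((a : k) + 1) = v := ha
      have hS : {i : ℕ | seqP k t lam i = v} = {0, a + 1} := by
        ext i
        cases i with
        | zero => simp [seqP, h0]
        | succ n =>
          simp only [Set.mem_setOf_eq, seqP, Set.mem_insert_iff, Set.mem_singleton_iff]
          constructor
          · intro h
            have hn : n ∈ ({a} : Set ℕ) :=
              hTa ▸ (h : n ∈ {i : ℕ | (lam i : k) - ((i : k) + 1) = v})
            have : n = a := hn
            right; omega
          · rintro (h | h)
            · exact absurd h (Nat.succ_ne_zero n)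
            · have hna : n = a := by omega
              rw [hna]; exact haa
      rw [hS, if_pos h0, if_pos ⟨a, haa⟩, Set.ncard_pair (by omega : (0:ℕ) ≠ a + 1)]
  · rcases Set.eq_empty_or_nonempty {i : ℕ | (lam i : k) - ((i : k) + 1) = v} with hT | ⟨a, ha⟩
    · have hx : ¬ ∃ i : ℕ, (lam i : k) - ((i : k) + 1) = v := by
        rintro ⟨i, hi⟩
        exact Set.eq_empty_iff_forall_notMem.mp hT i hi
      have hS : {i : ℕ | seqP k t lam i = v} = ∅ := by
        ext i
        cases i with
        | zero => simp [seqP, h0]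
        | succ n =>
          simp only [Set.mem_setOf_eq, seqP, Set.mem_empty_iff_false, iff_false]
          intro h; exact hx ⟨n, h⟩
      rw [hS, if_neg h0, if_neg hx, Set.ncard_empty]
    · have hTa : {i : ℕ | (lam i : k) - ((i : k) + 1) = v} = {a} :=
        (tail_subsingleton hl v).eq_singleton_of_mem ha
      have haa : (lam a : k) - ((a : k) + 1) = v := ha
      have hS : {i : ℕ | seqP k t lam i = v} = {a + 1} := by
        ext i
        cases i with
        | zero => simp [seqP, h0]
        | succ n =>
          simp only [Set.mem_setOf_eq, seqP, Set.mem_singleton_iff]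
          constructor
          · intro h
            have hn : n ∈ ({a} : Set ℕ) :=
              hTa ▸ (h : n ∈ {i : ℕ | (lam i : k) - ((i : k) + 1) = v})
            have : n = a := hn
            omega
          · intro h
            have hna : n = a := by omega
            rw [hna]; exact haa
      rw [hS, if_neg h0, if_pos ⟨a, haa⟩, Set.ncard_singleton]

lemma strictAnti_eq_of_range {f g : ℕ → ℤ} (hf : StrictAnti f) (hg : StrictAnti g)
    (h : ∀ w, (∃ i, f i = w) ↔ (∃ i, g i = w)) : ∀ n, f n = g n := by
  intro n
  induction n using Nat.strong_induction_on with
  | _ n ih =>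
    have h1 : f n ≤ g n := by
      obtain ⟨j, hj⟩ := (h (f n)).mp ⟨n, rfl⟩
      rcases lt_or_ge j n with hjn | hjn
      · exfalso
        have hfj : f j = f n := (ih j hjn).trans hj
        exact absurd (hf.injective hfj) (Nat.ne_of_lt hjn)
      · calc f n = g j := hj.symm
          _ ≤ g n := hg.antitone hjn
    have h2 : g n ≤ f n := by
      obtain ⟨j, hj⟩ := (h (g n)).mpr ⟨n, rfl⟩
      rcases lt_or_ge j n with hjn | hjn
      · exfalso
        have hgj : g j = g n := (ih j hjn).symm.trans hj
        exact absurd (hg.injective hgj) (Nat.ne_of_lt hjn)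
      · calc g n = f j := hj.symm
          _ ≤ f n := hf.antitone hjn
    omega

/-- If `t ∈ k` is not the image of any natural number, then every partition is typical for
`t`:  if `λ ∼_t μ` (the sequences `s_t(λ)` and `s_t(μ)` are rearrangements of each other),
then `λ = μ`. -/
theorem stmt12 (k : Type*) [Field k] [CharZero k] (t : k) (ht : ∀ m : ℕ, t ≠ (m : k))
    (lam mu : ℕ →₀ ℕ) (hl : Antitone ⇑lam) (hm : Antitone ⇑mu)
    (hsim : ∀ v : k, {i : ℕ | seqP k t lam i = v}.ncard = {i : ℕ | seqP k t mu i = v}.ncard) :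
    lam = mu := by
  have key : ∀ v : k,
      ((if t - (partSize lam : k) = v then 1 else 0) +
        (if ∃ i : ℕ, (lam i : k) - ((i : k) + 1) = v then 1 else 0) : ℕ) =
      (if t - (partSize mu : k) = v then 1 else 0) +
        (if ∃ i : ℕ, (mu i : k) - ((i : k) + 1) = v then 1 else 0) := by
    intro v
    rw [← ncard_seqP k t lam hl v, ← ncard_seqP k t mu hm v]
    exact hsim v
  have hsize : partSize lam = partSize mu := by
    by_contra hne
    have hk := key (t - (partSize lam : k))
    rw [if_pos rfl, if_neg (fun h : t - (partSize mu : k) = t - (partSize lam : k) => by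
      have hBA : ((partSize mu : k)) = (partSize lam : k) := sub_right_injective h
      exact hne (Nat.cast_injective hBA).symm)] at hk
    have hQ : ∃ i : ℕ, (mu i : k) - ((i : k) + 1) = t - (partSize lam : k) := by
      by_contra h
      rw [if_neg h] at hk
      split_ifs at hk <;> omega
    have hP : ¬ ∃ i : ℕ, (lam i : k) - ((i : k) + 1) = t - (partSize lam : k) := by
      intro h
      rw [if_pos h, if_pos hQ] at hk
      omega
    obtain ⟨i, hi⟩ := hQ
    set n : ℤ := (mu i : ℤ) - (i + 1) + (partSize lam : ℤ) with hn
    have htn : t = (n : k) := by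
      have h' : t = (mu i : k) - ((i : k) + 1) + (partSize lam : k) := by linear_combination -hi
      rw [h', hn]; push_cast; ring
    have hneg : n < 0 := by
      by_contra hge
      push_neg at hge
      have : t = ((n.toNat : ℕ) : k) := by
        rw [htn]
        exact_mod_cast congrArg (Int.cast : ℤ → k) (Int.toNat_of_nonneg hge).symm
      exact ht n.toNat this
    apply hP
    set m : ℕ := (-n).toNat with hmdef
    have hmZ : (m : ℤ) = -n := Int.toNat_of_nonneg (by omega)
    have hm1 : 1 ≤ m := by omega
    refine ⟨partSize lam + m - 1, ?_⟩
    have hjz : lam (partSize lam + m - 1) = 0 := eq_zero_of_partSize_le hl (by omega)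
    have hjZ : ((partSize lam + m - 1 : ℕ) : ℤ) = (partSize lam : ℤ) - n - 1 := by
      push_cast [Nat.cast_sub (by omega : 1 ≤ partSize lam + m)]
      omega
    have hjk : ((partSize lam + m - 1 : ℕ) : k) = (partSize lam : k) - (n : k) - 1 := by
      calc ((partSize lam + m - 1 : ℕ) : k) = (((partSize lam + m - 1 : ℕ) : ℤ) : k) := by
            push_cast; ring
        _ = (partSize lam : k) - (n : k) - 1 := by rw [hjZ]; push_cast; ring
    rw [hjz, hjk, htn]
    push_cast
    ring
  have hrange : ∀ w : ℤ, (∃ i : ℕ, (lam i : ℤ) - (i + 1) = w) ↔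
      (∃ i : ℕ, (mu i : ℤ) - (i + 1) = w) := by
    intro w
    have hk := key ((w : ℤ) : k)
    rw [hsize] at hk
    have hb := Nat.add_left_cancel hk
    have hiff : (∃ i : ℕ, (lam i : k) - ((i : k) + 1) = ((w : ℤ) : k)) ↔
        (∃ i : ℕ, (mu i : k) - ((i : k) + 1) = ((w : ℤ) : k)) := by
      split_ifs at hb with h1 h2 h2 <;> tauto
    constructor
    · rintro ⟨i, hi⟩
      have hik : (lam i : k) - ((i : k) + 1) = ((w : ℤ) : k) := by
        have := congrArg (fun z : ℤ => (z : k)) hi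
        push_cast at this
        exact this
      obtain ⟨j, hj⟩ := hiff.mp ⟨i, hik⟩
      exact ⟨j, by exact_mod_cast hj⟩
    · rintro ⟨i, hi⟩
      have hik : (mu i : k) - ((i : k) + 1) = ((w : ℤ) : k) := by
        have := congrArg (fun z : ℤ => (z : k)) hi
        push_cast at this
        exact this
      obtain ⟨j, hj⟩ := hiff.mpr ⟨i, hik⟩
      exact ⟨j, by exact_mod_cast hj⟩
  have hpt := strictAnti_eq_of_range (F_strictAnti hl) (F_strictAnti hm) hrange
  ext i
  have h2 : (lam i : ℤ) - (i + 1) = (mu i : ℤ) - (i + 1) := hpt i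
  omega
end
end

section
/- Let l, m, n, a, b, c, d be natural numbers with b + c + d = l, a + c + d = m, and a + b + d = n. Consider set partitions of the three-fold disjoint union Fin l ⊕ Fin m ⊕ Fin n all of whose blocks have one of the following forms: a two-element block meeting the second and third summands, a two-element block meeting the first and third summands, a two-element block meeting the first and second summands, or a three-element block meeting all three summands; and which have exactly a blocks of the first form, b of the second form, c of the third form, and d of the fourth form. The number of such set partitions equals l!·m!·n!/(a!·b!·c!·d!). (The counting claim established in the proofs of Lemma 3.11 and Theorem 3.12 of the paper, where this set is denoted Ω^d_{l,m,n}.) -/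
/-!
Enumerate the blocks of each kind. A partition in the set being counted, together with an
enumeration of its `a`, `b`, `c`, `d` blocks of the four kinds, is the same thing as a map `f` from
`Fin l ⊕ Fin m ⊕ Fin n` to a label set `Λ` with `a`, `b`, `c`, `d` labels of the four kinds, such
that the fibre over each label is a block of that label's kind. On each summand such an `f` is a
bijection onto the labels whose kind meets that summand, so there are `l! m! n!` of them. Two such
maps have the same fibres exactly when they differ by a kind-preserving permutation of `Λ`, and
there are `a! b! c! d!` of those.
-/

noncomputable section

/-- A two-element block meeting the second and third summands of `Fin l ⊕ Fin m ⊕ Fin n`. -/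
def BlockA (l m n : ℕ) (B : Set (Fin l ⊕ Fin m ⊕ Fin n)) : Prop :=
  ∃ (x : Fin m) (y : Fin n), B = {Sum.inr (Sum.inl x), Sum.inr (Sum.inr y)}

/-- A two-element block meeting the first and third summands. -/
def BlockB (l m n : ℕ) (B : Set (Fin l ⊕ Fin m ⊕ Fin n)) : Prop :=
  ∃ (x : Fin l) (y : Fin n), B = {Sum.inl x, Sum.inr (Sum.inr y)}

/-- A two-element block meeting the first and second summands. -/
def BlockC (l m n : ℕ) (B : Set (Fin l ⊕ Fin m ⊕ Fin n)) : Prop :=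
  ∃ (x : Fin l) (y : Fin m), B = {Sum.inl x, Sum.inr (Sum.inl y)}

/-- A three-element block meeting all three summands. -/
def BlockD (l m n : ℕ) (B : Set (Fin l ⊕ Fin m ⊕ Fin n)) : Prop :=
  ∃ (x : Fin l) (y : Fin m) (z : Fin n),
    B = {Sum.inl x, Sum.inr (Sum.inl y), Sum.inr (Sum.inr z)}

open Function Nat

namespace Setoid

variable {X Y : Type*}

theorem classes_ker_of_surjective {f : X → Y} (hf : Surjective f) :
    (ker f).classes = Set.range fun y => f ⁻¹' {y} := by
  ext s
  constructor
  · rintro ⟨x, rfl⟩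
    exact ⟨f x, rfl⟩
  · rintro ⟨y, rfl⟩
    obtain ⟨x, rfl⟩ := hf y
    exact ⟨x, rfl⟩

theorem ncard_sep_classes_ker {f : X → Y} (hf : Surjective f) (P : Set X → Prop) :
    {B | B ∈ (ker f).classes ∧ P B}.ncard = {y | P (f ⁻¹' {y})}.ncard := by
  have hinj : Injective fun y => f ⁻¹' {y} :=
    (Set.preimage_injective.mpr hf).comp Set.singleton_injective
  rw [← Set.ncard_image_of_injective _ hinj, classes_ker_of_surjective hf]
  congr 1
  ext B
  simp only [Set.mem_ofPred_eq, Set.mem_range, Set.mem_image]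
  constructor
  · rintro ⟨⟨y, rfl⟩, hB⟩
    exact ⟨y, hB, rfl⟩
  · rintro ⟨y, hy, rfl⟩
    exact ⟨⟨y, rfl⟩, hy⟩

theorem exists_perm_comp_eq_of_ker_eq {f g : X → Y} (hf : Surjective f) (hg : Surjective g)
    (h : ker f = ker g) : ∃ σ : Equiv.Perm Y, g = σ ∘ f := by
  have hfg : ∀ x x', f x = f x' ↔ g x = g x' := fun x x' => by
    rw [← ker_def, ← ker_def, h]
  let σ : Y → Y := fun y => g (surjInv hf y)
  have hσ : σ ∘ f = g := funext fun x => (hfg _ _).mp (surjInv_eq hf (f x))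
  have hbij : Bijective σ := by
    refine ⟨fun y y' hyy' => ?_, ?_⟩
    · obtain ⟨x, rfl⟩ := hf y
      obtain ⟨x', rfl⟩ := hf y'
      exact (hfg x x').mpr (by rw [← hσ]; exact hyy')
    · exact Surjective.of_comp (hσ ▸ hg)
  exact ⟨Equiv.ofBijective σ hbij, hσ.symm⟩

end Setoid

theorem Nat.card_eq_card_mul_of_fiber_equiv {E T G : Type*} (Φ : E → T)
    (h : ∀ t, Nonempty ({e // Φ e = t} ≃ G)) : Nat.card E = Nat.card T * Nat.card G := by
  rw [← Nat.card_prod, Nat.card_congr ((Equiv.sigmaFiberEquiv Φ).symm.trans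
    ((Equiv.sigmaCongrRight fun t => (h t).some).trans (Equiv.sigmaEquivProd T G)))]

theorem Nat.card_injective_range_eq {α β : Type*} (s : Set β) :
    Nat.card {g : α → β // Injective g ∧ Set.range g = s} = Nat.card (α ≃ s) :=
  Nat.card_congr
    { toFun g := (Equiv.ofInjective g.1 g.2.1).trans (Equiv.setCongr g.2.2)
      invFun e := ⟨Subtype.val ∘ e, Subtype.val_injective.comp e.injective, by
        rw [Set.range_comp, e.range_eq_univ, Set.image_univ, Subtype.range_coe]⟩
      left_inv _ := rfl
      right_inv _ := Equiv.ext fun _ => rfl }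

theorem Nat.card_sum_arrow_subtype {α β γ Y : Type*} (p : (α → Y) → Prop)
    (q : (β → Y) → Prop) (r : (γ → Y) → Prop) :
    Nat.card {f : α ⊕ β ⊕ γ → Y //
        p (f ∘ Sum.inl) ∧ q (f ∘ Sum.inr ∘ Sum.inl) ∧ r (f ∘ Sum.inr ∘ Sum.inr)} =
      Nat.card {g // p g} * Nat.card {g // q g} * Nat.card {g // r g} := by
  let e := (Equiv.sumArrowEquivProdArrow α (β ⊕ γ) Y).trans
    (Equiv.prodCongr (Equiv.refl _) (Equiv.sumArrowEquivProdArrow β γ Y))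
  refine (Nat.card_congr ((e.subtypeEquiv (q := fun g => p g.1 ∧ q g.2.1 ∧ r g.2.2)
      fun _ => Iff.rfl).trans
    (Equiv.subtypeProdEquivProd.trans
      (Equiv.prodCongr (Equiv.refl _) Equiv.subtypeProdEquivProd)))).trans ?_
  rw [Nat.card_prod, Nat.card_prod, mul_assoc]

theorem forall_preimage_singleton_iff_injective_and_range_eq {α β : Type*} (g : α → β)
    (p : β → Prop) :
    (∀ y, (g ⁻¹' {y}).Subsingleton ∧ ((g ⁻¹' {y}).Nonempty ↔ p y)) ↔
      Injective g ∧ Set.range g = {y | p y} := by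
  simp only [forall_and, Set.ext_iff, Set.mem_range, Set.mem_ofPred_eq]
  exact and_congr
    ⟨fun h x x' hx => h (g x') hx rfl, fun h y x hx x' hx' => h (hx.trans hx'.symm)⟩ Iff.rfl

open Setoid

section BlockLabelling

variable {X Y K : Type*} {κ : Y → K} {IsBlock : K → Set X → Prop}

variable (κ IsBlock) in
def IsBlockLabelling (f : X → Y) : Prop :=
  ∀ y, IsBlock (κ y) (f ⁻¹' {y})

variable (κ IsBlock) in
def HasBlockCounts (π : Setoid X) : Prop :=
  (∀ B ∈ π.classes, ∃ k, IsBlock k B) ∧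
    ∀ k, {B | B ∈ π.classes ∧ IsBlock k B}.ncard = Nat.card {y // κ y = k}

theorem IsBlockLabelling.surjective (hne : ∀ k B, IsBlock k B → B.Nonempty) {f : X → Y}
    (hf : IsBlockLabelling κ IsBlock f) : Surjective f :=
  fun y => hne _ _ (hf y)

theorem IsBlockLabelling.hasBlockCounts (hne : ∀ k B, IsBlock k B → B.Nonempty)
    (huniq : ∀ k k' B, IsBlock k B → IsBlock k' B → k = k') {f : X → Y}
    (hf : IsBlockLabelling κ IsBlock f) : HasBlockCounts κ IsBlock (ker f) := by
  have hs := hf.surjective hne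
  refine ⟨?_, fun k => ?_⟩
  · rw [classes_ker_of_surjective hs]
    rintro _ ⟨y, rfl⟩
    exact ⟨_, hf y⟩
  · rw [ncard_sep_classes_ker hs, ← Nat.card_coe_set_eq]
    exact Nat.card_congr <| Equiv.subtypeEquivRight fun y =>
      ⟨fun h => huniq _ _ _ (hf y) h, fun h => h ▸ hf y⟩

theorem exists_isBlockLabelling_ker_eq [Finite X] [Finite Y]
    (huniq : ∀ k k' B, IsBlock k B → IsBlock k' B → k = k') {π : Setoid X}
    (hπ : HasBlockCounts κ IsBlock π) : ∃ f : X → Y, IsBlockLabelling κ IsBlock f ∧ ker f = π := by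
  choose kindOf hkind using fun B : π.classes => hπ.1 B B.2
  have hfib : ∀ k, Nonempty ({y // κ y = k} ≃ {B // kindOf B = k}) := fun k => by
    rw [← Finite.card_eq, ← hπ.2 k, ← Nat.card_coe_set_eq]
    exact Nat.card_congr ((Equiv.subtypeEquivRight (p := fun B => kindOf B = k) fun B =>
      ⟨fun h => h ▸ hkind B, fun h => huniq _ _ _ (hkind B) h⟩).trans
      (Equiv.subtypeSubtypeEquivSubtypeInter _ fun B => IsBlock k B)).symm
  let ψ : Y ≃ π.classes := Equiv.ofFiberEquiv fun k => (hfib k).some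
  let f : X → Y := fun x => ψ.symm ⟨{z | π z x}, π.mem_classes x⟩
  have hf : ∀ x y, f x = y ↔ x ∈ (ψ y : Set X) := fun x y => by
    rw [Equiv.symm_apply_eq, Subtype.ext_iff]
    exact ⟨fun h => h ▸ π.refl x,
      fun h => eq_of_mem_classes (π.mem_classes x) (π.refl x) (ψ y).2 h⟩
  refine ⟨f, fun y => ?_, Setoid.ext fun x x' => ?_⟩
  · have hfy : f ⁻¹' {y} = ψ y := Set.ext fun x => hf x y
    rw [hfy, ← Equiv.ofFiberEquiv_map (fun k => (hfib k).some) y]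
    exact hkind _
  · rw [ker_def, hf, Equiv.apply_symm_apply]
    rfl

theorem IsBlockLabelling.perm_comp {f : X → Y} (hf : IsBlockLabelling κ IsBlock f)
    {σ : Equiv.Perm Y} (hσ : κ ∘ σ = κ) : IsBlockLabelling κ IsBlock (σ ∘ f) := fun y => by
  have hpre : (σ ∘ f) ⁻¹' {y} = f ⁻¹' {σ.symm y} := by ext x; simp [Equiv.eq_symm_apply]
  have hκ : κ (σ.symm y) = κ y := by simpa using (congrFun hσ (σ.symm y)).symm
  rw [hpre, ← hκ]
  exact hf _

theorem IsBlockLabelling.nonempty_fiber_equiv (hne : ∀ k B, IsBlock k B → B.Nonempty)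
    (huniq : ∀ k k' B, IsBlock k B → IsBlock k' B → k = k') {f₀ : X → Y}
    (hf₀ : IsBlockLabelling κ IsBlock f₀) :
    Nonempty ({f : {f // IsBlockLabelling κ IsBlock f} // ker f.1 = ker f₀} ≃
      {σ : Equiv.Perm Y // κ ∘ σ = κ}) := by
  have hs₀ := hf₀.surjective hne
  have ker_comp : ∀ σ : Equiv.Perm Y, ker (σ ∘ f₀) = ker f₀ := fun σ =>
    Setoid.ext fun x x' => by simp [ker_def]
  refine ⟨(Equiv.ofBijective (fun σ => ⟨⟨σ.1 ∘ f₀, hf₀.perm_comp σ.2⟩, ker_comp σ⟩)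
    ⟨fun σ τ h => ?_, ?_⟩).symm⟩
  · exact Subtype.ext <| Equiv.coe_fn_injective <|
      hs₀.injective_comp_right (congrArg (·.1.1) h)
  · rintro ⟨⟨f, hf⟩, hker⟩
    obtain ⟨σ, rfl⟩ := exists_perm_comp_eq_of_ker_eq hs₀ (hf.surjective hne) hker.symm
    refine ⟨⟨σ, funext fun y => huniq _ _ _ ?_ (hf₀ y)⟩, rfl⟩
    have : (σ ∘ f₀) ⁻¹' {σ y} = f₀ ⁻¹' {y} := by ext x; simp
    simpa only [this, comp_apply] using hf (σ y)

theorem card_isBlockLabelling [Finite X] [Fintype Y] [DecidableEq Y] [Fintype K] [DecidableEq K]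
    (hne : ∀ k B, IsBlock k B → B.Nonempty)
    (huniq : ∀ k k' B, IsBlock k B → IsBlock k' B → k = k') :
    Nat.card {f : X → Y // IsBlockLabelling κ IsBlock f} =
      Nat.card {π : Setoid X // HasBlockCounts κ IsBlock π} *
        ∏ k, (Fintype.card {y // κ y = k})! := by
  let Φ : {f // IsBlockLabelling κ IsBlock f} → {π // HasBlockCounts κ IsBlock π} :=
    fun f => ⟨ker f.1, f.2.hasBlockCounts hne huniq⟩
  rw [← DomMulAct.stabilizer_card κ, ← Nat.card_eq_fintype_card]
  refine Nat.card_eq_card_mul_of_fiber_equiv Φ fun ⟨π, hπ⟩ => ?_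
  obtain ⟨f₀, hf₀, rfl⟩ := exists_isBlockLabelling_ker_eq huniq hπ
  obtain ⟨e⟩ := hf₀.nonempty_fiber_equiv hne huniq
  exact ⟨(Equiv.subtypeEquivRight fun f => Subtype.ext_iff).trans e⟩

end BlockLabelling

/-- Kind `k < 3` is the kind of block that misses the `k`-th summand; kind `3` meets all three. -/
def BlockOfKind (l m n : ℕ) : Fin 4 → Set (Fin l ⊕ Fin m ⊕ Fin n) → Prop :=
  ![BlockA l m n, BlockB l m n, BlockC l m n, BlockD l m n]

section Blocks

variable {l m n : ℕ}

theorem blockOfKind_iff (k : Fin 4) (S : Set (Fin l ⊕ Fin m ⊕ Fin n)) :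
    BlockOfKind l m n k S ↔
      ((Sum.inl ⁻¹' S).Subsingleton ∧ ((Sum.inl ⁻¹' S).Nonempty ↔ k ≠ 0)) ∧
      (((Sum.inr ∘ Sum.inl) ⁻¹' S).Subsingleton ∧
        (((Sum.inr ∘ Sum.inl) ⁻¹' S).Nonempty ↔ k ≠ 1)) ∧
      (((Sum.inr ∘ Sum.inr) ⁻¹' S).Subsingleton ∧
        (((Sum.inr ∘ Sum.inr) ⁻¹' S).Nonempty ↔ k ≠ 2)) := by
  constructor
  · fin_cases k <;>
      [rintro ⟨y, z, rfl⟩; rintro ⟨x, z, rfl⟩; rintro ⟨x, y, rfl⟩; rintro ⟨x, y, z, rfl⟩] <;>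
      simp [Set.preimage, Set.Subsingleton]
  · rintro ⟨⟨hL, hL'⟩, ⟨hM, hM'⟩, ⟨hN, hN'⟩⟩
    rcases hL.eq_empty_or_singleton with hL₀ | ⟨x, hL₀⟩ <;>
    rcases hM.eq_empty_or_singleton with hM₀ | ⟨y, hM₀⟩ <;>
    rcases hN.eq_empty_or_singleton with hN₀ | ⟨z, hN₀⟩ <;>
    rw [hL₀] at hL' <;> rw [hM₀] at hM' <;> rw [hN₀] at hN' <;>
    fin_cases k <;> simp at hL' hM' hN' <;> simp only [Set.ext_iff] at hL₀ hM₀ hN₀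
    -- only the four cases consistent with `k` survive
    · exact ⟨y, z, by ext (x' | y' | z') <;> simp_all⟩
    · exact ⟨x, z, by ext (x' | y' | z') <;> simp_all⟩
    · exact ⟨x, y, by ext (x' | y' | z') <;> simp_all⟩
    · exact ⟨x, y, z, by ext (x' | y' | z') <;> simp_all⟩

theorem blockOfKind_nonempty (k : Fin 4) (S : Set (Fin l ⊕ Fin m ⊕ Fin n))
    (h : BlockOfKind l m n k S) : S.Nonempty := by
  fin_cases k <;>
    [obtain ⟨y, z, rfl⟩ := h; obtain ⟨x, z, rfl⟩ := h; obtain ⟨x, y, rfl⟩ := h;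
      obtain ⟨x, y, z, rfl⟩ := h] <;>
    simp

theorem blockOfKind_unique (k k' : Fin 4) (S : Set (Fin l ⊕ Fin m ⊕ Fin n))
    (h : BlockOfKind l m n k S) (h' : BlockOfKind l m n k' S) : k = k' := by
  rw [blockOfKind_iff] at h h'
  fin_cases k <;> fin_cases k' <;> simp_all

end Blocks

abbrev Label (a b c d : ℕ) := Σ k : Fin 4, Fin (![a, b, c, d] k)

section Labels

variable {a b c d : ℕ}

theorem card_label_fst_eq (k : Fin 4) :
    Fintype.card {v : Label a b c d // v.1 = k} = ![a, b, c, d] k := by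
  rw [Fintype.card_congr (Equiv.sigmaSubtype k), Fintype.card_fin]

theorem card_label_fst_ne (k : Fin 4) :
    Nat.card {v : Label a b c d | v.1 ≠ k} = a + b + c + d - ![a, b, c, d] k := by
  rw [Set.coe_ofPred, Nat.card_eq_fintype_card, Fintype.card_subtype_compl, card_label_fst_eq,
    Fintype.card_sigma, Fin.sum_univ_four]
  simp only [Fintype.card_fin]
  simp [add_assoc]

theorem card_equiv_label_fst_ne {k : Fin 4} {j : ℕ} (h : a + b + c + d - ![a, b, c, d] k = j) :
    Nat.card (Fin j ≃ {v : Label a b c d | v.1 ≠ k}) = j ! := by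
  have : Nat.card {v : Label a b c d | v.1 ≠ k} = Nat.card (Fin j) := by
    rw [card_label_fst_ne, h, Nat.card_fin]
  obtain ⟨e⟩ := Finite.card_eq.mp this
  rw [Nat.card_eq_fintype_card, Fintype.card_equiv e.symm, Fintype.card_fin]

variable {l m n : ℕ}

theorem isBlockLabelling_iff (f : Fin l ⊕ Fin m ⊕ Fin n → Label a b c d) :
    IsBlockLabelling Sigma.fst (BlockOfKind l m n) f ↔
      (Injective (f ∘ Sum.inl) ∧ Set.range (f ∘ Sum.inl) = {v | v.1 ≠ 0}) ∧
      (Injective (f ∘ Sum.inr ∘ Sum.inl) ∧ Set.range (f ∘ Sum.inr ∘ Sum.inl) = {v | v.1 ≠ 1}) ∧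
      (Injective (f ∘ Sum.inr ∘ Sum.inr) ∧ Set.range (f ∘ Sum.inr ∘ Sum.inr) = {v | v.1 ≠ 2}) := by
  simp only [IsBlockLabelling, blockOfKind_iff,
    ← forall_preimage_singleton_iff_injective_and_range_eq, Set.preimage_comp, forall_and]

theorem card_isBlockLabelling_blockOfKind (h1 : b + c + d = l) (h2 : a + c + d = m)
    (h3 : a + b + d = n) :
    Nat.card {f : Fin l ⊕ Fin m ⊕ Fin n → Label a b c d //
      IsBlockLabelling Sigma.fst (BlockOfKind l m n) f} = l ! * m ! * n ! := by
  refine (Nat.card_congr (Equiv.subtypeEquivRight isBlockLabelling_iff)).trans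
    ((Nat.card_sum_arrow_subtype
      (fun g : Fin l → Label a b c d => Injective g ∧ Set.range g = {v | v.1 ≠ 0})
      (fun g : Fin m → Label a b c d => Injective g ∧ Set.range g = {v | v.1 ≠ 1})
      (fun g : Fin n → Label a b c d => Injective g ∧ Set.range g = {v | v.1 ≠ 2})).trans ?_)
  rw [Nat.card_injective_range_eq, Nat.card_injective_range_eq, Nat.card_injective_range_eq,
    card_equiv_label_fst_ne (by simp; omega), card_equiv_label_fst_ne (by simp; omega),
    card_equiv_label_fst_ne (by simp; omega)]

theorem hasBlockCounts_blockOfKind_iff (π : Setoid (Fin l ⊕ Fin m ⊕ Fin n)) :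
    HasBlockCounts (Sigma.fst : Label a b c d → Fin 4) (BlockOfKind l m n) π ↔
      (∀ B ∈ π.classes, BlockA l m n B ∨ BlockB l m n B ∨ BlockC l m n B ∨ BlockD l m n B) ∧
        {B | B ∈ π.classes ∧ BlockA l m n B}.ncard = a ∧
        {B | B ∈ π.classes ∧ BlockB l m n B}.ncard = b ∧
        {B | B ∈ π.classes ∧ BlockC l m n B}.ncard = c ∧
        {B | B ∈ π.classes ∧ BlockD l m n B}.ncard = d := by
  simp [HasBlockCounts, Nat.card_eq_fintype_card, card_label_fst_eq, Fin.exists_fin_succ,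
    Fin.forall_fin_succ, BlockOfKind]

end Labels

/-- The number of set partitions of `Fin l ⊕ Fin m ⊕ Fin n` (encoded as equivalence
relations, with blocks the equivalence classes) all of whose blocks have one of the four
listed forms, with exactly `a`, `b`, `c`, `d` blocks of the respective forms, equals
`l!·m!·n!/(a!·b!·c!·d!)` (stated multiplicatively). -/
theorem stmt18 (l m n a b c d : ℕ) (h1 : b + c + d = l) (h2 : a + c + d = m)
    (h3 : a + b + d = n) :
    Nat.card {π : Setoid (Fin l ⊕ Fin m ⊕ Fin n) //
        (∀ B ∈ π.classes, BlockA l m n B ∨ BlockB l m n B ∨ BlockC l m n B ∨ BlockD l m n B) ∧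
        {B | B ∈ π.classes ∧ BlockA l m n B}.ncard = a ∧
        {B | B ∈ π.classes ∧ BlockB l m n B}.ncard = b ∧
        {B | B ∈ π.classes ∧ BlockC l m n B}.ncard = c ∧
        {B | B ∈ π.classes ∧ BlockD l m n B}.ncard = d} *
      (a.factorial * b.factorial * c.factorial * d.factorial)
      = l.factorial * m.factorial * n.factorial := by
  have hcount := card_isBlockLabelling (κ := (Sigma.fst : Label a b c d → Fin 4))
    (IsBlock := BlockOfKind l m n) blockOfKind_nonempty blockOfKind_unique
  rw [card_isBlockLabelling_blockOfKind h1 h2 h3, Fin.prod_univ_four] at hcount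
  simp only [card_label_fst_eq] at hcount
  rw [hcount, Nat.card_congr (Equiv.subtypeEquivRight hasBlockCounts_blockOfKind_iff)]
  simp [mul_assoc]
end
end

section
/- The map sending a set partition π of Fin m ⊕ Fin n to the triple (π|_{Fin m}, π|_{Fin n}, M_π) — where π|_A denotes the set partition of A whose blocks are the nonempty intersections of the blocks of π with A, and M_π is the set of pairs (B₁, B₂) with B₁ a block of π|_{Fin m}, B₂ a block of π|_{Fin n}, and B₁ ∪ B₂ a block of π — is a bijection onto the set of triples (P, Q, M) where P is a set partition of Fin m, Q is a set partition of Fin n, and M is a partial matching between the blocks of P and the blocks of Q (a set of pairs (B₁, B₂) of blocks of P and Q respectively in which each block of P and each block of Q occurs in at most one pair). (This is the combinatorial core of the triangular decomposition of the partition category, Theorem 3.2 of the paper: every partition diagram factors uniquely as an upward diagram, a permutation, and a downward diagram.) -/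
noncomputable section

namespace Stmt19Aux

variable {α β : Type*}

lemma mem_class_of_rel {r : Setoid α} {s : Set α} (hs : s ∈ r.classes) {a b : α}
    (ha : a ∈ s) (hab : r b a) : b ∈ s := by
  obtain ⟨y, rfl⟩ := hs
  exact r.trans' hab ha

lemma rel_of_mem_class {r : Setoid α} {s : Set α} (hs : s ∈ r.classes) {a b : α}
    (ha : a ∈ s) (hb : b ∈ s) : r a b := by
  obtain ⟨y, rfl⟩ := hs
  exact r.trans' ha (r.symm' hb)

lemma nonempty_of_mem_classes {r : Setoid α} {s : Set α} (hs : s ∈ r.classes) : s.Nonempty := by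
  obtain ⟨y, rfl⟩ := hs
  exact ⟨y, r.refl' y⟩

lemma union_inj {s s' : Set α} {t t' : Set β}
    (h : Sum.inl '' s ∪ Sum.inr '' t = Sum.inl '' s' ∪ Sum.inr '' t') : s = s' ∧ t = t' := by
  constructor
  · ext x
    have := Set.ext_iff.mp h (Sum.inl x)
    simpa using this
  · ext x
    have := Set.ext_iff.mp h (Sum.inr x)
    simpa using this

/-- the matching set of a partition -/
def matchSet (π : Setoid (α ⊕ β)) : Set (Set α × Set β) :=
  {p | p.1 ∈ (Setoid.comap Sum.inl π).classes ∧
       p.2 ∈ (Setoid.comap Sum.inr π).classes ∧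
       (Sum.inl '' p.1 ∪ Sum.inr '' p.2) ∈ π.classes}

lemma mixed_iff (π : Setoid (α ⊕ β)) (a : α) (b : β) :
    π (.inl a) (.inr b) ↔ ∃ p ∈ matchSet π, a ∈ p.1 ∧ b ∈ p.2 := by
  constructor
  · intro h
    refine ⟨({x | π (.inl x) (.inl a)}, {y | π (.inr y) (.inl a)}),
      ⟨?_, ?_, ?_⟩, π.refl' _, π.symm' h⟩
    · exact Setoid.mem_classes _ a
    · have : {y | π (.inr y) (.inl a)} = {y | (Setoid.comap Sum.inr π) y b} := by
        ext y
        exact ⟨fun hy => π.trans' hy h, fun hy => π.trans' hy (π.symm' h)⟩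
      rw [this]
      exact Setoid.mem_classes _ b
    · have : (Sum.inl '' {x | π (.inl x) (.inl a)} ∪ Sum.inr '' {y | π (.inr y) (.inl a)})
          = {z | π z (.inl a)} := by
        ext z
        cases z <;> simp
      rw [this]
      exact Setoid.mem_classes _ _
  · rintro ⟨p, ⟨-, -, w, hw⟩, ha, hb⟩
    have h1 : Sum.inl a ∈ Sum.inl '' p.1 ∪ Sum.inr '' p.2 := Or.inl ⟨a, ha, rfl⟩
    have h2 : Sum.inr b ∈ Sum.inl '' p.1 ∪ Sum.inr '' p.2 := Or.inr ⟨b, hb, rfl⟩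
    rw [hw] at h1 h2
    exact π.trans' h1 (π.symm' h2)

section mk
variable (P : Setoid α) (Q : Setoid β) (M : Set (Set α × Set β))

/-- the relation built from `P`, `Q`, `M` -/
def mrel : α ⊕ β → α ⊕ β → Prop := fun x y =>
  match x, y with
  | .inl a, .inl b => P a b
  | .inl a, .inr b => ∃ p ∈ M, a ∈ p.1 ∧ b ∈ p.2
  | .inr a, .inl b => ∃ p ∈ M, b ∈ p.1 ∧ a ∈ p.2
  | .inr a, .inr b => Q a b

variable (hcl : ∀ p ∈ M, p.1 ∈ P.classes ∧ p.2 ∈ Q.classes)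
  (hM1 : ∀ p ∈ M, ∀ q ∈ M, p.1 = q.1 → p = q)
  (hM2 : ∀ p ∈ M, ∀ q ∈ M, p.2 = q.2 → p = q)

include hcl hM1 hM2 in
lemma mrel_equiv : Equivalence (mrel P Q M) := by
  constructor
  · rintro (a | a)
    · exact P.refl' a
    · exact Q.refl' a
  · rintro (a | a) (b | b) h
    · exact P.symm' h
    · exact h
    · exact h
    · exact Q.symm' h
  · rintro (a | a) (b | b) (c | c) h1 h2
    · exact P.trans' h1 h2
    · obtain ⟨p, hp, hb, hc⟩ := h2
      exact ⟨p, hp, mem_class_of_rel (hcl p hp).1 hb h1, hc⟩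
    · obtain ⟨p, hp, ha, hb⟩ := h1
      obtain ⟨q, hq, hc, hb'⟩ := h2
      have hpq : p = q := hM2 p hp q hq
        (Setoid.eq_of_mem_classes (hcl p hp).2 hb (hcl q hq).2 hb')
      subst hpq
      exact rel_of_mem_class (hcl p hp).1 ha hc
    · obtain ⟨p, hp, ha, hb⟩ := h1
      exact ⟨p, hp, ha, mem_class_of_rel (hcl p hp).2 hb (Q.symm' h2)⟩
    · obtain ⟨p, hp, hb, ha⟩ := h1
      exact ⟨p, hp, mem_class_of_rel (hcl p hp).1 hb (P.symm' h2), ha⟩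
    · obtain ⟨p, hp, hb, ha⟩ := h1
      obtain ⟨q, hq, hb', hc⟩ := h2
      have hpq : p = q := hM1 p hp q hq
        (Setoid.eq_of_mem_classes (hcl p hp).1 hb (hcl q hq).1 hb')
      subst hpq
      exact rel_of_mem_class (hcl p hp).2 ha hc
    · obtain ⟨p, hp, hc, hb⟩ := h2
      exact ⟨p, hp, hc, mem_class_of_rel (hcl p hp).2 hb h1⟩
    · exact Q.trans' h1 h2

/-- the setoid built from `P`, `Q`, `M` -/
def mk : Setoid (α ⊕ β) := ⟨mrel P Q M, mrel_equiv P Q M hcl hM1 hM2⟩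

lemma comap_inl_mk : Setoid.comap Sum.inl (mk P Q M hcl hM1 hM2) = P :=
  Setoid.ext fun _ _ => Iff.rfl

lemma comap_inr_mk : Setoid.comap Sum.inr (mk P Q M hcl hM1 hM2) = Q :=
  Setoid.ext fun _ _ => Iff.rfl

lemma matchSet_mk : matchSet (mk P Q M hcl hM1 hM2) = M := by
  set π := mk P Q M hcl hM1 hM2 with hπ
  ext p
  constructor
  · rintro ⟨h1, h2, hu⟩
    rw [comap_inl_mk] at h1
    rw [comap_inr_mk] at h2
    obtain ⟨a, ha⟩ := nonempty_of_mem_classes h1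
    obtain ⟨b, hb⟩ := nonempty_of_mem_classes h2
    have hr : π (.inl a) (.inr b) :=
      rel_of_mem_class hu (Or.inl ⟨a, ha, rfl⟩) (Or.inr ⟨b, hb, rfl⟩)
    obtain ⟨q, hq, haq, hbq⟩ : ∃ q ∈ M, a ∈ q.1 ∧ b ∈ q.2 := hr
    have e1 : p.1 = q.1 := Setoid.eq_of_mem_classes h1 ha (hcl q hq).1 haq
    have e2 : p.2 = q.2 := Setoid.eq_of_mem_classes h2 hb (hcl q hq).2 hbq
    have : p = q := Prod.ext e1 e2
    rw [this]; exact hq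
  · intro hp
    obtain ⟨a, ha⟩ := nonempty_of_mem_classes (hcl p hp).1
    refine ⟨by rw [comap_inl_mk]; exact (hcl p hp).1,
      by rw [comap_inr_mk]; exact (hcl p hp).2, ?_⟩
    have : (Sum.inl '' p.1 ∪ Sum.inr '' p.2) = {z | π z (.inl a)} := by
      ext z
      cases z with
      | inl x =>
        simp only [Set.mem_union, Set.mem_image]
        constructor
        · rintro (⟨x', hx', hxe⟩ | ⟨y, _, hye⟩)
          · cases hxe
            exact rel_of_mem_class (hcl p hp).1 hx' ha
          · cases hye
        · intro h
          exact Or.inl ⟨x, mem_class_of_rel (hcl p hp).1 ha h, rfl⟩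
      | inr y =>
        simp only [Set.mem_union, Set.mem_image]
        constructor
        · rintro (⟨x', _, hxe⟩ | ⟨y', hy', hye⟩)
          · cases hxe
          · cases Sum.inr.inj hye
            exact ⟨p, hp, ha, hy'⟩
        · rintro ⟨q, hq, haq, hyq⟩
          have : p = q := hM1 p hp q hq
            (Setoid.eq_of_mem_classes (hcl p hp).1 ha (hcl q hq).1 haq)
          subst this
          exact Or.inr ⟨y, hyq, rfl⟩
    rw [this]
    exact Setoid.mem_classes _ _

end mk

end Stmt19Aux

namespace Stmt19Aux

lemma mixed_eq {α β : Type*} (π π' : Setoid (α ⊕ β)) (h : matchSet π = matchSet π')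
    (a : α) (b : β) : π (.inl a) (.inr b) ↔ π' (.inl a) (.inr b) := by
  rw [mixed_iff, mixed_iff, h]

end Stmt19Aux

/-- The map sending a set partition `π` of `Fin m ⊕ Fin n` (encoded as an equivalence
relation) to the triple `(π|_{Fin m}, π|_{Fin n}, M_π)`, where `π|_A` is the restriction
(whose blocks are the nonempty intersections of the blocks of `π` with `A`) and `M_π` is the
set of pairs `(B₁, B₂)` of blocks of the restrictions whose union is a block of `π`,
is a bijection onto the set of triples `(P, Q, M)` consisting of set partitions `P` of
`Fin m` and `Q` of `Fin n` together with a partial matching `M` between the blocks of `P`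
and the blocks of `Q`. -/
theorem stmt19 (m n : ℕ) :
    Set.BijOn
      (fun π : Setoid (Fin m ⊕ Fin n) =>
        ((Setoid.comap (Sum.inl : Fin m → Fin m ⊕ Fin n) π,
          Setoid.comap (Sum.inr : Fin n → Fin m ⊕ Fin n) π,
          {p : Set (Fin m) × Set (Fin n) |
            p.1 ∈ (Setoid.comap (Sum.inl : Fin m → Fin m ⊕ Fin n) π).classes ∧
            p.2 ∈ (Setoid.comap (Sum.inr : Fin n → Fin m ⊕ Fin n) π).classes ∧
            ((Sum.inl : Fin m → Fin m ⊕ Fin n) '' p.1 ∪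
              (Sum.inr : Fin n → Fin m ⊕ Fin n) '' p.2) ∈ π.classes}) :
          Setoid (Fin m) × Setoid (Fin n) × Set (Set (Fin m) × Set (Fin n))))
      Set.univ
      {x : Setoid (Fin m) × Setoid (Fin n) × Set (Set (Fin m) × Set (Fin n)) |
        (∀ p ∈ x.2.2, p.1 ∈ x.1.classes ∧ p.2 ∈ x.2.1.classes) ∧
        (∀ p ∈ x.2.2, ∀ q ∈ x.2.2, p.1 = q.1 → p = q) ∧
        (∀ p ∈ x.2.2, ∀ q ∈ x.2.2, p.2 = q.2 → p = q)} := by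
  refine ⟨?_, ?_, ?_⟩
  · -- MapsTo
    intro π _
    refine ⟨fun p hp => ⟨hp.1, hp.2.1⟩, ?_, ?_⟩
    · intro p hp q hq h
      obtain ⟨a, ha⟩ := Stmt19Aux.nonempty_of_mem_classes hp.1
      have hu : (Sum.inl '' p.1 ∪ Sum.inr '' p.2) = (Sum.inl '' q.1 ∪ Sum.inr '' q.2) :=
        Setoid.eq_of_mem_classes hp.2.2 (Or.inl ⟨a, ha, rfl⟩) hq.2.2 (Or.inl ⟨a, h ▸ ha, rfl⟩)
      exact Prod.ext h (Stmt19Aux.union_inj hu).2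
    · intro p hp q hq h
      obtain ⟨b, hb⟩ := Stmt19Aux.nonempty_of_mem_classes hp.2.1
      have hu : (Sum.inl '' p.1 ∪ Sum.inr '' p.2) = (Sum.inl '' q.1 ∪ Sum.inr '' q.2) :=
        Setoid.eq_of_mem_classes hp.2.2 (Or.inr ⟨b, hb, rfl⟩) hq.2.2 (Or.inr ⟨b, h ▸ hb, rfl⟩)
      exact Prod.ext (Stmt19Aux.union_inj hu).1 h
  · -- InjOn
    intro π _ π' _ h
    simp only [Prod.mk.injEq] at h
    obtain ⟨h1, h2, h3⟩ := h
    have h3' : Stmt19Aux.matchSet π = Stmt19Aux.matchSet π' := h3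
    refine Setoid.ext ?_
    rintro (a | a) (b | b)
    · exact Setoid.ext_iff.mp h1 a b
    · exact Stmt19Aux.mixed_eq π π' h3' a b
    · exact ⟨fun h => π'.symm' ((Stmt19Aux.mixed_eq π π' h3' b a).mp (π.symm' h)),
        fun h => π.symm' ((Stmt19Aux.mixed_eq π π' h3' b a).mpr (π'.symm' h))⟩
    · exact Setoid.ext_iff.mp h2 a b
  · -- SurjOn
    rintro ⟨P, Q, M⟩ ⟨hcl, hM1, hM2⟩
    refine ⟨Stmt19Aux.mk P Q M hcl hM1 hM2, Set.mem_univ _, ?_⟩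
    exact Prod.ext (Stmt19Aux.comap_inl_mk P Q M hcl hM1 hM2)
      (Prod.ext (Stmt19Aux.comap_inr_mk P Q M hcl hM1 hM2)
        (Stmt19Aux.matchSet_mk P Q M hcl hM1 hM2))
end
end
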